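/- arXiv:1710.01897 — 3 statements merged into one kernel-verified Lean document; each statement's English description precedes it below -/
import Mathlib

section
/- (Weighted transport estimate.) For every nonnegative measurable function w : Ω → ℝ and every s ∈ [−T,T], ∫_Ω φ(x) w(F_s(x)) dx ≤ (1 + Γ_div C₁(T) |s| / φ_*) ∫_Ω φ(x) w(x) dx, where C₁(T) = (φ^*/φ_*) exp(Γ_div T / φ_*). -/
open MeasureTheory Set



/-- A Lipschitz-on-a-set map of a Euclidean space to itself sends null sets to null sets. -/
lemma image_null_of_lipschitzOnWith {d : ℕ} {K : NNReal}
    {f : EuclideanSpace ℝ (Fin d) → EuclideanSpace ℝ (Fin d)}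
    {s : Set (EuclideanSpace ℝ (Fin d))}
    (hf : LipschitzOnWith K f s) (hs : volume s = 0) : volume (f '' s) = 0 := by
  classical
  set e := (MeasurableEquiv.toLp 2 (Fin d → ℝ)).symm with he_def
  have hmp : MeasurePreserving e volume volume :=
    EuclideanSpace.volume_preserving_symm_measurableEquiv_toLp (Fin d)
  have hmp' : MeasurePreserving e.symm volume volume := hmp.symm e
  -- null sets transfer along `e` and `e.symm`
  have hnull : ∀ A : Set (EuclideanSpace ℝ (Fin d)), volume A = 0 → volume (⇑e '' A) = 0 := by
    intro A hA
    rw [MeasurableEquiv.image_eq_preimage_symm]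
    have h1 : volume (toMeasurable volume A) = 0 := by
      rwa [measure_toMeasurable]
    apply le_antisymm ?_ zero_le
    calc volume (⇑e.symm ⁻¹' A) ≤ volume (⇑e.symm ⁻¹' (toMeasurable volume A)) :=
          measure_mono (preimage_mono (subset_toMeasurable _ _))
      _ = volume (toMeasurable volume A) :=
          hmp'.measure_preimage (measurableSet_toMeasurable _ _).nullMeasurableSet
      _ = 0 := h1
  have hnull' : ∀ A : Set (Fin d → ℝ), volume A = 0 → volume (⇑e ⁻¹' A) = 0 := by
    intro A hA
    have h1 : volume (toMeasurable volume A) = 0 := by rwa [measure_toMeasurable]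
    apply le_antisymm ?_ zero_le
    calc volume (⇑e ⁻¹' A) ≤ volume (⇑e ⁻¹' (toMeasurable volume A)) :=
          measure_mono (preimage_mono (subset_toMeasurable _ _))
      _ = volume (toMeasurable volume A) :=
          hmp.measure_preimage (measurableSet_toMeasurable _ _).nullMeasurableSet
      _ = 0 := h1
  -- `e` and `e.symm` are Lipschitz, being continuous linear equivs
  set ℓ := PiLp.continuousLinearEquiv 2 ℝ (fun _ : Fin d => ℝ) with hℓ_def
  have heℓ : ⇑e = ⇑ℓ := rfl
  have heℓ' : ⇑e.symm = ⇑ℓ.symm := rfl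
  obtain ⟨K₁, hK₁⟩ : ∃ K₁, LipschitzWith K₁ ⇑ℓ := ⟨_, ℓ.lipschitz⟩
  obtain ⟨K₂, hK₂⟩ : ∃ K₂, LipschitzWith K₂ ⇑ℓ.symm := ⟨_, ℓ.symm.lipschitz⟩
  -- transfer to the sup-norm pi space
  set t : Set (Fin d → ℝ) := ⇑e '' s with ht_def
  have ht0 : volume t = 0 := hnull s hs
  have hcomp : LipschitzOnWith (K₁ * (K * K₂)) (⇑ℓ ∘ f ∘ ⇑ℓ.symm) t := by
    apply LipschitzWith.comp_lipschitzOnWith hK₁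
    apply hf.comp (hK₂.lipschitzOnWith (s := t))
    intro y hy
    rcases hy with ⟨x, hx, rfl⟩
    have h3 : ⇑ℓ.symm (⇑e x) = x := by rw [← heℓ']; exact e.symm_apply_apply x
    rw [h3]; exact hx
  have hH : (μH[(d:ℝ)] : Measure (Fin d → ℝ)) = volume := by
    simpa using (hausdorffMeasure_pi_real (ι := Fin d))
  have h2 : volume ((⇑ℓ ∘ f ∘ ⇑ℓ.symm) '' t) = 0 := by
    have := hcomp.hausdorffMeasure_image_le (d := (d:ℝ)) (by positivity)
    rw [hH, ht0, mul_zero] at this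
    exact le_antisymm this zero_le
  have himg : (⇑ℓ ∘ f ∘ ⇑ℓ.symm) '' t = ⇑e '' (f '' s) := by
    rw [ht_def, ← image_comp, ← image_comp]
    apply image_congr
    intro x hx
    show ⇑ℓ (f (⇑ℓ.symm (⇑e x))) = ⇑e (f x)
    have h3 : ⇑ℓ.symm (⇑e x) = x := by rw [← heℓ']; exact e.symm_apply_apply x
    rw [h3, heℓ]
  rw [himg] at h2
  have : f '' s ⊆ ⇑e ⁻¹' (⇑e '' (f '' s)) := subset_preimage_image _ _
  exact measure_mono_null this (hnull' _ h2)

/-- A locally (on an open set) Lipschitz map of a Euclidean space to itself sends null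
subsets of that set to null sets. -/
lemma image_null_of_locally_lipschitz {d : ℕ}
    {f : EuclideanSpace ℝ (Fin d) → EuclideanSpace ℝ (Fin d)}
    {S M : Set (EuclideanSpace ℝ (Fin d))}
    (hM : M ⊆ S) (hM0 : volume M = 0)
    (hf : ∀ x ∈ S, ∃ ε > (0:ℝ), ∃ L : NNReal, LipschitzOnWith L f (Metric.ball x ε ∩ S)) :
    volume (f '' M) = 0 := by
  classical
  choose! ε hε L hL using hf
  obtain ⟨t, htS, htc, hcov⟩ :=
    TopologicalSpace.countable_cover_nhdsWithin (f := fun x => Metric.ball x (ε x)) (s := S)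
      (fun x hx => mem_nhdsWithin_of_mem_nhds (Metric.ball_mem_nhds x (hε x hx)))
  have hsub : f '' M ⊆ ⋃ x ∈ t, f '' (M ∩ Metric.ball x (ε x)) := by
    rintro _ ⟨m, hm, rfl⟩
    have := hcov (hM hm)
    simp only [mem_iUnion] at this ⊢
    obtain ⟨x, hx, hmx⟩ := this
    exact ⟨x, hx, m, ⟨hm, hmx⟩, rfl⟩
  apply measure_mono_null hsub
  rw [measure_biUnion_null_iff htc]
  intro x hx
  apply image_null_of_lipschitzOnWith ((hL x (htS hx)).mono ?_)
    (measure_mono_null inter_subset_left hM0)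
  exact fun y hy => ⟨hy.2, hM hy.1⟩


/-- Integral-form Grönwall estimate for a primitive. -/
lemma gronwall_core (f : ℝ → ℝ) (A c b : ℝ) (hA : 0 < A) (hc : 0 ≤ c) (hb : 0 ≤ b)
    (hf : ∀ᵐ r ∂(volume.restrict (Icc 0 b)), |f r| ≤ c * (A + ∫ t in (0:ℝ)..r, f t)) :
    A + ∫ t in (0:ℝ)..b, f t ≤ A * Real.exp (c * b) := by
  have hexp1 : 1 ≤ Real.exp (c * b) := Real.one_le_exp (mul_nonneg hc hb)
  by_cases hfi : IntervalIntegrable f volume 0 b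
  case neg =>
    rw [intervalIntegral.integral_undef hfi]
    nlinarith
  set u : ℝ → ℝ := fun r => A + ∫ t in (0:ℝ)..r, f t with hu_def
  have hfi' : ∀ r ∈ Icc (0:ℝ) b, IntervalIntegrable f volume 0 r := by
    intro r hr
    apply hfi.mono_set
    rw [uIcc_of_le hr.1, uIcc_of_le hb]
    exact Icc_subset_Icc le_rfl hr.2
  have hfint : IntegrableOn f (uIcc 0 b) volume := by
    rw [uIcc_of_le hb]
    exact (integrableOn_Icc_iff_integrableOn_Ioc).2 hfi.1
  have hu_cont : ContinuousOn u (Icc 0 b) := by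
    have h := intervalIntegral.continuousOn_primitive_interval (a := 0) (b := b) hfint
    rw [uIcc_of_le hb] at h
    exact continuousOn_const.add h
  set W : ℝ → ℝ := fun r => ∫ t in (0:ℝ)..r, u t with hW_def
  have hu_int : ∀ r ∈ Icc (0:ℝ) b, IntervalIntegrable u volume 0 r := by
    intro r hr
    exact (hu_cont.mono (Icc_subset_Icc le_rfl hr.2)).intervalIntegrable_of_Icc hr.1
  have hW_cont : ContinuousOn W (Icc 0 b) := by
    have h := intervalIntegral.continuousOn_primitive_interval (a := 0) (b := b)
      (μ := volume) (f := u) ?_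
    · rwa [uIcc_of_le hb] at h
    · rw [uIcc_of_le hb]
      exact hu_cont.integrableOn_Icc
  have hle : ∀ r ∈ Icc (0:ℝ) b, u r ≤ A + c * W r := by
    intro r hr
    have hfir := hfi' r hr
    have hcu : IntervalIntegrable (fun t => c * u t) volume 0 r :=
      ((hu_cont.mono (Icc_subset_Icc le_rfl hr.2)).intervalIntegrable_of_Icc hr.1).const_mul c
    have h1 : (∫ t in (0:ℝ)..r, f t) ≤ ∫ t in (0:ℝ)..r, |f t| :=
      intervalIntegral.integral_mono hr.1 hfir hfir.abs (fun t => le_abs_self _)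
    have h2 : (∫ t in (0:ℝ)..r, |f t|) ≤ ∫ t in (0:ℝ)..r, c * u t := by
      apply intervalIntegral.integral_mono_ae_restrict hr.1 hfir.abs hcu
      exact ae_restrict_of_ae_restrict_of_subset (Icc_subset_Icc le_rfl hr.2) hf
    have h3 : (∫ t in (0:ℝ)..r, c * u t) = c * W r := by
      rw [hW_def]; exact intervalIntegral.integral_const_mul c u
    have : u r = A + ∫ t in (0:ℝ)..r, f t := rfl
    rw [this]; rw [h3] at h2; linarith
  set ψ : ℝ → ℝ := fun r => Real.exp (-c * r) * (c * W r + A) with hψ_def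
  have hψd : ∀ r ∈ Ioo (0:ℝ) b, HasDerivAt ψ
      (Real.exp (-c * r) * (c * u r - c * (c * W r + A))) r := by
    intro r hr
    have hmem : Icc (0:ℝ) b ∈ nhds r := Icc_mem_nhds hr.1 hr.2
    have hWd : HasDerivAt W (u r) r := by
      apply intervalIntegral.integral_hasDerivAt_right (hu_int r ⟨hr.1.le, hr.2.le⟩)
      · exact ⟨Icc 0 b, hmem, hu_cont.aestronglyMeasurable measurableSet_Icc⟩
      · exact hu_cont.continuousAt hmem
    have h1 : HasDerivAt (fun r : ℝ => Real.exp (-c * r)) (Real.exp (-c * r) * (-c)) r := by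
      have hg : HasDerivAt (fun r : ℝ => -c * r) (-c) r := by
        simpa using (hasDerivAt_id r).const_mul (-c)
      exact hg.exp
    have h2 : HasDerivAt (fun r => c * W r + A) (c * u r) r := (hWd.const_mul c).add_const A
    have := h1.mul h2
    refine this.congr_deriv ?_
    ring
  have hψ_anti : AntitoneOn ψ (Icc 0 b) := by
    apply antitoneOn_of_deriv_nonpos (convex_Icc 0 b)
    · apply ContinuousOn.mul
      · exact (Real.continuous_exp.comp (continuous_const.mul continuous_id)).continuousOn
      · exact (continuousOn_const.mul hW_cont).add continuousOn_const
    · rw [interior_Icc]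
      intro r hr
      exact ((hψd r hr).differentiableAt).differentiableWithinAt
    · rw [interior_Icc]
      intro r hr
      rw [(hψd r hr).deriv]
      have h4 := hle r (Ioo_subset_Icc_self hr)
      have h5 : 0 < Real.exp (-c * r) := Real.exp_pos _
      have h6 : c * u r - c * (c * W r + A) ≤ 0 := by nlinarith
      exact mul_nonpos_of_nonneg_of_nonpos h5.le h6
  have hψb : ψ b ≤ ψ 0 := hψ_anti (left_mem_Icc.2 hb) (right_mem_Icc.2 hb) hb
  have hψ0 : ψ 0 = A := by
    simp [hψ_def, hW_def]
  rw [hψ0] at hψb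
  have hWb : c * W b + A ≤ A * Real.exp (c * b) := by
    have hepos : 0 < Real.exp (-c * b) := Real.exp_pos _
    have hprod : Real.exp (-c * b) * Real.exp (c * b) = 1 := by
      rw [← Real.exp_add]; ring_nf; exact Real.exp_zero
    have hψb' : Real.exp (-c * b) * (c * W b + A) ≤ A := hψb
    have h7 := mul_le_mul_of_nonneg_right hψb' (Real.exp_pos (c * b)).le
    nlinarith [h7]
  have hfinal := hle b (right_mem_Icc.2 hb)
  show u b ≤ A * Real.exp (c * b)
  linarith


lemma exp_le_one_add_mul_aux {a C : ℝ} (ha : 0 ≤ a) (hC : Real.exp a ≤ C) :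
    Real.exp a ≤ 1 + a * C := by
  have h3 := Real.add_one_le_exp (-a)
  have h4 : Real.exp (-a) * Real.exp a = 1 := by
    rw [← Real.exp_add]; simp
  have h5 : Real.exp a ≤ 1 + a * Real.exp a := by
    nlinarith [Real.exp_pos a]
  have h6 : a * Real.exp a ≤ a * C := mul_le_mul_of_nonneg_left hC ha
  linarith

/-- **Weighted transport estimate.** For every nonnegative measurable `w` and every
`s ∈ [-T,T]`, `∫_Ω φ(x) w(F_s(x)) dx ≤ (1 + Γ_div C₁(T) |s| / φ_*) ∫_Ω φ(x) w(x) dx`,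
where `C₁(T) = (φ^*/φ_*) exp(Γ_div T / φ_*)`. -/
theorem weighted_transport_estimate
    {d : ℕ} (Ω : Set (EuclideanSpace ℝ (Fin d)))
    (hΩo : IsOpen Ω) (hΩb : Bornology.IsBounded Ω)
    (T φs φS Γdiv : ℝ) (hT : 0 < T) (hφs : 0 < φs)
    (φ : EuclideanSpace ℝ (Fin d) → ℝ) (hφm : Measurable φ)
    (hφ : ∀ᵐ x ∂(volume.restrict Ω), φs ≤ φ x ∧ φ x ≤ φS)
    (V : EuclideanSpace ℝ (Fin d) → EuclideanSpace ℝ (Fin d))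
    (hVm : Measurable V) (hVb : ∃ M, ∀ x ∈ Ω, ‖V x‖ ≤ M)
    (g : EuclideanSpace ℝ (Fin d) → ℝ) (hgm : Measurable g)
    (hgb : ∀ᵐ x ∂(volume.restrict Ω), |g x| ≤ Γdiv)
    (hdiv : ∀ ψ : EuclideanSpace ℝ (Fin d) → ℝ, ContDiff ℝ (⊤ : ℕ∞) ψ →
      ∫ x in Ω, (inner ℝ (gradient ψ x) (V x) : ℝ) = - ∫ x in Ω, ψ x * g x)
    (𝒞 : Set (EuclideanSpace ℝ (Fin d))) (h𝒞c : IsClosed 𝒞)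
    (h𝒞0 : volume 𝒞 = 0) (h𝒞Ω : 𝒞 ⊆ Ω)
    (F : ℝ → EuclideanSpace ℝ (Fin d) → EuclideanSpace ℝ (Fin d))
    (hFmaps : ∀ t ∈ Icc (-T) T, MapsTo (F t) (Ω \ 𝒞) (Ω \ 𝒞))
    (hF0 : ∀ x ∈ Ω \ 𝒞, F 0 x = x)
    (hFlip : ∀ x ∈ Ω \ 𝒞, ∃ L : NNReal, LipschitzOnWith L (fun t => F t x) (Icc (-T) T))
    (hFode : ∀ x ∈ Ω \ 𝒞, ∃ S : Set ℝ, S.Countable ∧ ∀ t ∈ Icc (-T) T \ S,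
      HasDerivAt (fun τ => F τ x) ((φ (F t x))⁻¹ • V (F t x)) t)
    (hFinj : ∀ t ∈ Icc (-T) T, InjOn (F t) (Ω \ 𝒞))
    (hFsurj : ∀ t ∈ Icc (-T) T, SurjOn (F t) (Ω \ 𝒞) (Ω \ 𝒞))
    (hFloclip : ∀ t ∈ Icc (-T) T, ∀ x ∈ Ω \ 𝒞, ∃ ε > (0:ℝ), ∃ L : NNReal,
      LipschitzOnWith L (F t) (Metric.ball x ε ∩ (Ω \ 𝒞)))
    (hFgrp : ∀ s ∈ Icc (-T) T, ∀ t ∈ Icc (-T) T, s + t ∈ Icc (-T) T →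
      ∀ x ∈ Ω \ 𝒞, F (t + s) x = F t (F s x))
    (J : ℝ → EuclideanSpace ℝ (Fin d) → ℝ)
    (hJ : ∀ t ∈ Icc (-T) T, ∀ᵐ x ∂(volume.restrict Ω),
      ∃ L : EuclideanSpace ℝ (Fin d) →L[ℝ] EuclideanSpace ℝ (Fin d),
        HasFDerivAt (F t) L x ∧
        J t x = LinearMap.det (L : EuclideanSpace ℝ (Fin d) →ₗ[ℝ] EuclideanSpace ℝ (Fin d)))
    -- Jacobian identity and bound, established for piecewise smooth `φ` and `V`:
    (hJid : ∀ᵐ x ∂(volume.restrict Ω), ∀ s ∈ Icc (-T) T,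
      (∫ t in (0:ℝ)..s, |J t x| * g (F t x)) = φ (F s x) * |J s x| - φ x)
    (hJbd : ∀ s ∈ Icc (-T) T, ∀ᵐ x ∂(volume.restrict Ω),
      |J s x| ≤ (φS / φs) * Real.exp (Γdiv * T / φs)) :
    ∀ w : EuclideanSpace ℝ (Fin d) → ℝ, Measurable w → (∀ x, 0 ≤ w x) →
      ∀ s ∈ Icc (-T) T,
        ∫⁻ x in Ω, ENNReal.ofReal (φ x * w (F s x))
          ≤ ENNReal.ofReal (1 + Γdiv * ((φS / φs) * Real.exp (Γdiv * T / φs)) * |s| / φs) *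
            ∫⁻ x in Ω, ENNReal.ofReal (φ x * w x) := by
  intro w hwm hw0 σ hσ
  classical
  set S : Set (EuclideanSpace ℝ (Fin d)) := Ω \ 𝒞 with hS_def
  have hSopen : IsOpen S := hΩo.sdiff h𝒞c
  have hSmeas : MeasurableSet S := hSopen.measurableSet
  have hΩmeas : MeasurableSet Ω := hΩo.measurableSet
  set C₁ : ℝ := (φS / φs) * Real.exp (Γdiv * T / φs) with hC₁_def
  set K : ℝ := 1 + Γdiv * C₁ * |σ| / φs with hK_def
  by_cases hμΩ : volume Ω = 0
  · rw [Measure.restrict_eq_zero.2 hμΩ]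
    simp
  have hne : (ae (volume.restrict Ω)).NeBot :=
    ae_neBot.2 (by rwa [Ne, Measure.restrict_eq_zero])
  obtain ⟨x₀, hx₀⟩ := (hφ.and hgb).exists
  have hΓ : 0 ≤ Γdiv := (abs_nonneg _).trans hx₀.2
  have hφsS : φs ≤ φS := hx₀.1.1.trans hx₀.1.2
  have hC₁0 : 0 ≤ C₁ :=
    mul_nonneg (div_nonneg (hφs.le.trans hφsS) hφs.le) (Real.exp_pos _).le
  have hK1 : 1 ≤ K := by
    have : 0 ≤ Γdiv * C₁ * |σ| / φs := by positivity
    rw [hK_def]; linarith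
  have hK0 : 0 ≤ K := by linarith
  set τ : ℝ := -σ with hτ_def
  have hτ : τ ∈ Icc (-T) T := ⟨by rw [hτ_def]; linarith [hσ.2], by rw [hτ_def]; linarith [hσ.1]⟩
  have hστ : σ + τ = 0 := by rw [hτ_def]; ring
  -- the bad null set of `φ` and `g`
  set N' : Set (EuclideanSpace ℝ (Fin d)) :=
    ({x | ¬ (φs ≤ φ x ∧ φ x ≤ φS)} ∪ {x | ¬ |g x| ≤ Γdiv}) ∩ Ω with hN'_def
  have hN'meas : MeasurableSet N' := by
    apply MeasurableSet.inter _ hΩmeas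
    apply MeasurableSet.union
    · exact ((measurableSet_le measurable_const hφm).inter
        (measurableSet_le hφm measurable_const)).compl
    · exact (measurableSet_le hgm.abs measurable_const).compl
  have hN'0 : volume N' = 0 := by
    rw [hN'_def, union_inter_distrib_right]
    apply measure_union_null
    · have h := ae_iff.1 hφ
      rwa [Measure.restrict_apply' hΩmeas] at h
    · have h := ae_iff.1 hgb
      rwa [Measure.restrict_apply' hΩmeas] at h
  -- flow facts
  have hmem_neg : ∀ t ∈ Icc (-T) T, -t ∈ Icc (-T) T := fun t ht =>
    ⟨by linarith [ht.2], by linarith [ht.1]⟩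
  have h0mem : (0:ℝ) ∈ Icc (-T) T := ⟨by linarith, by linarith⟩
  have hinv : ∀ t ∈ Icc (-T) T, ∀ x ∈ S, F (-t) (F t x) = x := by
    intro t ht x hx
    have h := hFgrp t ht (-t) (hmem_neg t ht) (by rw [add_neg_cancel]; exact h0mem) x hx
    rw [neg_add_cancel] at h
    exact h.symm.trans (hF0 x hx)
  have himgnull : ∀ t ∈ Icc (-T) T, ∀ M ⊆ S, volume M = 0 → volume (F t '' M) = 0 :=
    fun t ht M hMS hM0 => image_null_of_locally_lipschitz hMS hM0 (hFloclip t ht)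
  -- clamping to the time interval
  set clamp : ℝ → ℝ := fun t => max (-T) (min T t) with hclamp_def
  have hclamp_mem : ∀ t, clamp t ∈ Icc (-T) T := fun t =>
    ⟨le_max_left _ _, max_le (by linarith) (min_le_left _ _)⟩
  have hclamp_eq : ∀ t ∈ Icc (-T) T, clamp t = t := by
    intro t ht
    rw [hclamp_def]
    simp only
    rw [min_eq_right ht.2, max_eq_right ht.1]
  have hclamp_cont : Continuous clamp := continuous_const.max (continuous_const.min continuous_id)
  -- each time-slice of the bad set of the flow is null
  have hslice : ∀ t : ℝ, volume {x | x ∈ S ∧ F (clamp t) x ∈ N'} = 0 := by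
    intro t
    have ht' : clamp t ∈ Icc (-T) T := hclamp_mem t
    have hsub : {x | x ∈ S ∧ F (clamp t) x ∈ N'} ⊆ F (-(clamp t)) '' (N' ∩ S) := by
      rintro x ⟨hxS, hxN⟩
      exact ⟨F (clamp t) x, ⟨hxN, hFmaps _ ht' hxS⟩, hinv _ ht' x hxS⟩
    exact measure_mono_null hsub (himgnull _ (hmem_neg _ ht') (N' ∩ S) inter_subset_right
      (measure_mono_null inter_subset_left hN'0))
  -- joint measurability of the flow
  have hFcontx : ∀ t ∈ Icc (-T) T, ∀ x ∈ S, ContinuousAt (F t) x := by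
    intro t ht x hx
    obtain ⟨ε, hε, L, hL⟩ := hFloclip t ht x hx
    exact hL.continuousOn.continuousAt
      ((Metric.isOpen_ball.inter hSopen).mem_nhds ⟨Metric.mem_ball_self hε, hx⟩)
  have hFcontt : ∀ x ∈ S, ContinuousOn (fun t => F t x) (Icc (-T) T) := by
    intro x hx
    obtain ⟨L, hL⟩ := hFlip x hx
    exact hL.continuousOn
  set G : ℝ → ↥S → EuclideanSpace ℝ (Fin d) := fun t x => F (clamp t) ↑x with hG_def
  have hGmeas : Measurable (Function.uncurry G) := by
    apply measurable_uncurry_of_continuous_of_measurable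
    · intro x
      have h := (hFcontt ↑x x.2).comp (s := univ) hclamp_cont.continuousOn
        (fun t _ => hclamp_mem t)
      rw [continuousOn_univ] at h
      exact h
    · intro t
      apply Continuous.measurable
      rw [continuous_iff_continuousAt]
      intro x
      exact (hFcontx (clamp t) (hclamp_mem t) ↑x x.2).comp continuous_subtype_val.continuousAt
  set ι : ℝ × ↥S → (EuclideanSpace ℝ (Fin d)) × ℝ := fun p => (↑p.2, p.1) with hι_def
  have hι_emb : MeasurableEmbedding ι := by
    have h1 : MeasurableEmbedding
        (Prod.map (id : ℝ → ℝ) ((↑) : ↥S → EuclideanSpace ℝ (Fin d))) :=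
      MeasurableEmbedding.id.prodMap (MeasurableEmbedding.subtype_coe hSmeas)
    have h2 := (MeasurableEquiv.prodComm (α := ℝ) (β := EuclideanSpace ℝ (Fin d))).measurableEmbedding
    exact h2.comp h1
  set B : Set ((EuclideanSpace ℝ (Fin d)) × ℝ) := ι '' (Function.uncurry G ⁻¹' N') with hB_def
  have hBmeas : MeasurableSet B := hι_emb.measurableSet_image.2 (hGmeas hN'meas)
  have hBspec : ∀ p : (EuclideanSpace ℝ (Fin d)) × ℝ,
      p ∈ B ↔ p.1 ∈ S ∧ F (clamp p.2) p.1 ∈ N' := by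
    intro p
    constructor
    · rintro ⟨⟨t, x⟩, hmem, rfl⟩
      exact ⟨x.2, hmem⟩
    · rintro ⟨h1, h2⟩
      exact ⟨(p.2, ⟨p.1, h1⟩), h2, rfl⟩
  set ν : Measure ℝ := volume.restrict (Icc (-T) T) with hν_def
  set μΩ : Measure (EuclideanSpace ℝ (Fin d)) := volume.restrict Ω with hμΩ_def
  have hprodB : (μΩ.prod ν) B = 0 := by
    rw [Measure.prod_apply_symm hBmeas]
    have hz : ∀ t : ℝ, μΩ ((fun x => (x, t)) ⁻¹' B) = 0 := by
      intro t
      apply le_antisymm _ zero_le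
      calc μΩ ((fun x => (x, t)) ⁻¹' B) ≤ volume ((fun x => (x, t)) ⁻¹' B) :=
            Measure.le_iff'.1 Measure.restrict_le_self _
        _ = volume {x | x ∈ S ∧ F (clamp t) x ∈ N'} := by
            congr 1
            ext x
            exact hBspec (x, t)
        _ = 0 := hslice t
    calc (∫⁻ t, μΩ ((fun x => (x, t)) ⁻¹' B) ∂ν) = ∫⁻ _, 0 ∂ν := lintegral_congr hz
      _ = 0 := lintegral_zero
  have hstar : ∀ᵐ x ∂μΩ, x ∈ S → ∀ᵐ t ∂ν, F t x ∉ N' := by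
    have h1 : ∀ᵐ p ∂(μΩ.prod ν), p ∉ B := measure_eq_zero_iff_ae_notMem.1 hprodB
    have h2 := Measure.ae_ae_of_ae_prod h1
    filter_upwards [h2] with x hx hxS
    filter_upwards [hx, ae_restrict_mem measurableSet_Icc] with t ht htI
    intro hFN
    exact ht ((hBspec (x, t)).2 ⟨hxS, by rwa [hclamp_eq t htI]⟩)
  have hxS_ae : ∀ᵐ x ∂μΩ, x ∈ S := by
    rw [ae_iff, hμΩ_def, Measure.restrict_apply' hΩmeas]
    apply measure_mono_null _ h𝒞0
    rintro x ⟨hxnS, hxΩ⟩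
    by_contra hxC
    exact hxnS ⟨hxΩ, hxC⟩
  -- main pointwise estimate
  have hmain : ∀ᵐ x ∂μΩ, φ (F τ x) * |J τ x| ≤ K * φ x := by
    filter_upwards [hφ, hJid, hstar, hxS_ae] with x hφx hJidx hstarx hxS
    have hsx := hstarx hxS
    set f : ℝ → ℝ := fun t => |J t x| * g (F t x) with hf_def
    set A : ℝ := φ x with hA_def
    have hA : 0 < A := lt_of_lt_of_le hφs hφx.1
    set c : ℝ := Γdiv / φs with hc_def
    have hc : 0 ≤ c := div_nonneg hΓ hφs.le
    have hu_eq : ∀ s ∈ Icc (-T) T, A + ∫ t in (0:ℝ)..s, f t = φ (F s x) * |J s x| := by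
      intro s hs
      have h := hJidx s hs
      rw [hA_def]
      linarith
    have hbound : ∀ᵐ t ∂ν, |f t| ≤ c * (A + ∫ r in (0:ℝ)..t, f r) := by
      filter_upwards [hsx, ae_restrict_mem measurableSet_Icc] with t htN htI
      have hFtΩ : F t x ∈ Ω := (hFmaps t htI hxS).1
      have hgood : (φs ≤ φ (F t x) ∧ φ (F t x) ≤ φS) ∧ |g (F t x)| ≤ Γdiv := by
        by_contra hcon
        rw [not_and_or] at hcon
        apply htN
        refine ⟨?_, hFtΩ⟩
        rcases hcon with h | h
        · exact Or.inl h
        · exact Or.inr h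
      have hu := hu_eq t htI
      have hJle : |J t x| * φs ≤ A + ∫ r in (0:ℝ)..t, f r := by
        rw [hu, mul_comm]
        exact mul_le_mul_of_nonneg_right hgood.1.1 (abs_nonneg _)
      have habs : |f t| = |J t x| * |g (F t x)| := by
        rw [hf_def]
        simp only
        rw [abs_mul, abs_abs]
      rw [habs]
      calc |J t x| * |g (F t x)| ≤ |J t x| * Γdiv :=
            mul_le_mul_of_nonneg_left hgood.2 (abs_nonneg _)
        _ ≤ ((A + ∫ r in (0:ℝ)..t, f r) / φs) * Γdiv :=
            mul_le_mul_of_nonneg_right ((le_div_iff₀ hφs).2 hJle) hΓ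
        _ = c * (A + ∫ r in (0:ℝ)..t, f r) := by rw [hc_def]; ring
    have hbad : volume ({t | ¬ |f t| ≤ c * (A + ∫ r in (0:ℝ)..t, f r)} ∩ Icc (-T) T) = 0 := by
      have h := ae_iff.1 hbound
      rwa [hν_def, Measure.restrict_apply' measurableSet_Icc] at h
    have key : A + ∫ t in (0:ℝ)..τ, f t ≤ A * Real.exp (c * |τ|) := by
      rcases le_or_gt 0 τ with h0τ | h0τ
      · rw [abs_of_nonneg h0τ]
        apply gronwall_core f A c τ hA hc h0τ
        rw [ae_iff, Measure.restrict_apply' measurableSet_Icc]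
        apply measure_mono_null _ hbad
        rintro t ⟨ht1, ht2⟩
        exact ⟨ht1, ⟨by linarith [ht2.1, hτ.1], by linarith [ht2.2, hτ.2]⟩⟩
      · rw [abs_of_neg h0τ]
        set b : ℝ := -τ with hb_def
        have hb0 : 0 ≤ b := by rw [hb_def]; linarith
        set f2 : ℝ → ℝ := fun r => -f (-r) with hf2_def
        have hint : ∀ r : ℝ, (∫ u in (0:ℝ)..r, f2 u) = ∫ u in (0:ℝ)..(-r), f u := by
          intro r
          have h1 : (∫ u in (0:ℝ)..r, f2 u) = - ∫ u in (0:ℝ)..r, f (-u) := by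
            rw [hf2_def]
            exact intervalIntegral.integral_neg
          rw [h1, intervalIntegral.integral_comp_neg, neg_zero,
            ← intervalIntegral.integral_symm]
        have hb2 : ∀ᵐ r ∂(volume.restrict (Icc 0 b)),
            |f2 r| ≤ c * (A + ∫ u in (0:ℝ)..r, f2 u) := by
          rw [ae_iff, Measure.restrict_apply' measurableSet_Icc]
          have h2 : volume (Neg.neg ⁻¹' (toMeasurable volume
              ({t | ¬ |f t| ≤ c * (A + ∫ r in (0:ℝ)..t, f r)} ∩ Icc (-T) T))) = 0 := by
            rw [(Measure.measurePreserving_neg (volume : Measure ℝ)).measure_preimage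
              (measurableSet_toMeasurable _ _).nullMeasurableSet, measure_toMeasurable]
            exact hbad
          apply measure_mono_null _ h2
          rintro r ⟨hr1, hr2⟩
          apply subset_toMeasurable
          constructor
          · intro hcon
            apply hr1
            have hfr : |f2 r| = |f (-r)| := by rw [hf2_def]; simp only; rw [abs_neg]
            rw [hfr, hint r]
            exact hcon
          · constructor
            · rw [hb_def] at hr2
              have := hr2.2
              have := hτ.1
              simp only [mem_setOf_eq] at *
              linarith
            · have := hr2.1
              linarith [hT.le]
        have hg := gronwall_core f2 A c b hA hc hb0 hb2
        rw [hint b] at hg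
        have hτb : -b = τ := by rw [hb_def]; ring
        rw [hτb] at hg
        exact hg
    have huτ := hu_eq τ hτ
    have hexpK : Real.exp (c * |τ|) ≤ K := by
      have hτT : |τ| ≤ T := abs_le.2 ⟨hτ.1, hτ.2⟩
      have h1 : c * |τ| ≤ Γdiv * T / φs := by
        have hmm : Γdiv * |τ| ≤ Γdiv * T := mul_le_mul_of_nonneg_left hτT hΓ
        calc c * |τ| = Γdiv * |τ| / φs := by rw [hc_def]; ring
          _ ≤ Γdiv * T / φs := by apply div_le_div_of_nonneg_right hmm hφs.le
      have ha0 : 0 ≤ c * |τ| := mul_nonneg hc (abs_nonneg _)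
      have h5 : Real.exp (c * |τ|) ≤ Real.exp (Γdiv * T / φs) := Real.exp_le_exp.2 h1
      have h6 : Real.exp (Γdiv * T / φs) ≤ C₁ := by
        rw [hC₁_def]
        calc Real.exp (Γdiv * T / φs) = 1 * Real.exp (Γdiv * T / φs) := (one_mul _).symm
          _ ≤ (φS / φs) * Real.exp (Γdiv * T / φs) :=
            mul_le_mul_of_nonneg_right ((one_le_div hφs).2 hφsS) (Real.exp_pos _).le
      have h7 : Real.exp (c * |τ|) ≤ 1 + (c * |τ|) * C₁ :=
        exp_le_one_add_mul_aux ha0 (h5.trans h6)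
      have h8 : 1 + (c * |τ|) * C₁ = K := by
        rw [hK_def, hc_def, hτ_def, abs_neg]
        ring
      exact h7.trans_eq h8
    calc φ (F τ x) * |J τ x| = A + ∫ t in (0:ℝ)..τ, f t := huτ.symm
      _ ≤ A * Real.exp (c * |τ|) := key
      _ ≤ A * K := mul_le_mul_of_nonneg_left hexpK hA.le
      _ = K * φ x := by rw [hA_def, mul_comm]
  -- good measurable set for the change of variables
  have hJτ := hJ τ hτ
  set P : EuclideanSpace ℝ (Fin d) → Prop := fun x =>
    ∃ L : EuclideanSpace ℝ (Fin d) →L[ℝ] EuclideanSpace ℝ (Fin d),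
      HasFDerivAt (F τ) L x ∧
      J τ x = LinearMap.det (L : EuclideanSpace ℝ (Fin d) →ₗ[ℝ] EuclideanSpace ℝ (Fin d))
    with hP_def
  have hPnull : volume ({x | ¬ (P x ∧ φ (F τ x) * |J τ x| ≤ K * φ x)} ∩ Ω) = 0 := by
    have h := ae_iff.1 (hJτ.and hmain)
    rwa [Measure.restrict_apply' hΩmeas] at h
  set Z : Set (EuclideanSpace ℝ (Fin d)) :=
    toMeasurable volume ({x | ¬ (P x ∧ φ (F τ x) * |J τ x| ≤ K * φ x)} ∩ Ω) with hZ_def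
  have hZ0 : volume Z = 0 := by rw [hZ_def, measure_toMeasurable]; exact hPnull
  have hZmeas : MeasurableSet Z := measurableSet_toMeasurable _ _
  set s₂ : Set (EuclideanSpace ℝ (Fin d)) := S \ Z with hs₂_def
  have hs₂meas : MeasurableSet s₂ := hSmeas.diff hZmeas
  have hs₂S : s₂ ⊆ S := diff_subset
  have hs₂Ω : s₂ ⊆ Ω := fun x hx => (hs₂S hx).1
  have hs₂good : ∀ x ∈ s₂, P x ∧ φ (F τ x) * |J τ x| ≤ K * φ x := by
    intro x hx
    by_contra hcon
    exact hx.2 (subset_toMeasurable _ _ ⟨hcon, hx.1.1⟩)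
  have hSdiff : volume (S \ s₂) = 0 := by
    apply measure_mono_null _ hZ0
    rintro x ⟨hxS, hxn⟩
    by_contra hxZ
    exact hxn ⟨hxS, hxZ⟩
  set D : EuclideanSpace ℝ (Fin d) → (EuclideanSpace ℝ (Fin d) →L[ℝ] EuclideanSpace ℝ (Fin d)) :=
    fun x => if h : P x then h.choose else 0 with hD_def
  have hD : ∀ x ∈ s₂, HasFDerivAt (F τ) (D x) x ∧
      J τ x = LinearMap.det ((D x) : EuclideanSpace ℝ (Fin d) →ₗ[ℝ] EuclideanSpace ℝ (Fin d)) := by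
    intro x hx
    have hp := (hs₂good x hx).1
    rw [hD_def]
    simp only [dif_pos hp]
    exact hp.choose_spec
  have hCoV := lintegral_image_eq_lintegral_abs_det_fderiv_mul volume hs₂meas (f' := D)
    (fun x hx => (hD x hx).1.hasFDerivWithinAt) ((hFinj τ hτ).mono hs₂S)
    (fun y => ENNReal.ofReal (φ y * w (F σ y)))
  have himg_sub : F τ '' s₂ ⊆ S := by
    rintro y ⟨x, hx, rfl⟩
    exact hFmaps τ hτ (hs₂S hx)
  have hae_set : Ω =ᵐ[volume] (F τ '' s₂) := by
    rw [ae_eq_set]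
    constructor
    · have h1 : Ω \ (F τ '' s₂) ⊆ (Ω ∩ 𝒞) ∪ (F τ '' (S \ s₂)) := by
        rintro y ⟨hyΩ, hyn⟩
        by_cases hyC : y ∈ 𝒞
        · exact Or.inl ⟨hyΩ, hyC⟩
        · have hyS : y ∈ S := ⟨hyΩ, hyC⟩
          obtain ⟨x, hxS, hxy⟩ := hFsurj τ hτ hyS
          have hxns : x ∉ s₂ := fun hx => hyn ⟨x, hx, hxy⟩
          exact Or.inr ⟨x, ⟨hxS, hxns⟩, hxy⟩
      apply measure_mono_null h1
      exact measure_union_null (measure_mono_null inter_subset_right h𝒞0)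
        (himgnull τ hτ _ diff_subset hSdiff)
    · have h2 : F τ '' s₂ \ Ω = ∅ :=
        diff_eq_empty.2 (fun y hy => (himg_sub hy).1)
      rw [h2]
      exact measure_empty
  calc ∫⁻ x in Ω, ENNReal.ofReal (φ x * w (F σ x))
      = ∫⁻ x in F τ '' s₂, ENNReal.ofReal (φ x * w (F σ x)) := by
        rw [Measure.restrict_congr_set hae_set]
    _ = ∫⁻ x in s₂, ENNReal.ofReal |(D x).det|
          * ENNReal.ofReal (φ (F τ x) * w (F σ (F τ x))) := hCoV
    _ = ∫⁻ x in s₂, ENNReal.ofReal ((φ (F τ x) * |J τ x|) * w x) := by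
        apply setLIntegral_congr_fun hs₂meas
        intro x hx
        have hgrp : F σ (F τ x) = x := by
          have h := hFgrp τ hτ σ hσ (by rw [hτ_def, neg_add_cancel]; exact h0mem) x (hs₂S hx)
          rw [hστ] at h
          exact h.symm.trans (hF0 x (hs₂S hx))
        have hdet : |ContinuousLinearMap.det (D x)| = |J τ x| := by
          rw [(hD x hx).2]
        beta_reduce
        rw [hgrp, hdet, ← ENNReal.ofReal_mul (abs_nonneg _)]
        congr 1
        ring
    _ ≤ ∫⁻ x in s₂, ENNReal.ofReal (K * (φ x * w x)) := by
        apply lintegral_mono_ae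
        rw [ae_restrict_iff' hs₂meas]
        apply ae_of_all
        intro x hx
        apply ENNReal.ofReal_le_ofReal
        calc (φ (F τ x) * |J τ x|) * w x ≤ (K * φ x) * w x :=
              mul_le_mul_of_nonneg_right (hs₂good x hx).2 (hw0 x)
          _ = K * (φ x * w x) := by ring
    _ = ENNReal.ofReal K * ∫⁻ x in s₂, ENNReal.ofReal (φ x * w x) := by
        rw [← lintegral_const_mul' _ _ ENNReal.ofReal_ne_top]
        apply lintegral_congr
        intro x
        rw [ENNReal.ofReal_mul hK0]
    _ ≤ ENNReal.ofReal K * ∫⁻ x in Ω, ENNReal.ofReal (φ x * w x) :=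
        mul_le_mul_right (lintegral_mono' (Measure.restrict_mono hs₂Ω le_rfl) le_rfl) _
end

section
/- (Unweighted transport estimate.) For every nonnegative measurable function w : Ω → ℝ and every s ∈ [−T,T], ∫_Ω w(F_s(x)) dx ≤ (C₁(T)/φ_*) ∫_Ω φ(x) w(x) dx, where C₁(T) = (φ^*/φ_*) exp(Γ_div T / φ_*). -/
open MeasureTheory Set Pointwise

section Helpers

variable {E : Type*} [NormedAddCommGroup E] [NormedSpace ℝ E] [FiniteDimensional ℝ E]
  [MeasurableSpace E] [BorelSpace E] (μ : Measure E) [μ.IsAddHaarMeasure]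

/-- A Lipschitz-on map sends null sets to null sets. -/
lemma lipschitzOnWith_image_null {K : NNReal} {f : E → E} {s : Set E}
    (hf : LipschitzOnWith K f s) (hs : μ s = 0) : μ (f '' s) = 0 := by
  obtain ⟨δ, hδmem, hδ⟩ :
      ∃ δ : NNReal, δ ∈ Set.Ioi (0:NNReal) ∧
        ∀ (t : Set E) (g : E → E), ApproximatesLinearOn g (0 : E →L[ℝ] E) t δ →
          μ (g '' t) ≤ ((Real.toNNReal |(0 : E →L[ℝ] E).det| + 1 : NNReal) : ENNReal) * μ t := by
    have h := MeasureTheory.addHaar_image_le_mul_of_det_lt μ (0 : E →L[ℝ] E)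
      (m := Real.toNNReal |(0 : E →L[ℝ] E).det| + 1) (by
        rw [ENNReal.ofReal]
        exact_mod_cast lt_add_one _)
    exact (h.and self_mem_nhdsWithin).exists.imp fun δ hδ => ⟨hδ.2, fun t g hg => hδ.1 t g hg⟩
  have hδpos : (0:NNReal) < δ := hδmem
  set c : NNReal := δ / (K + 1) with hc
  have hcpos : (0:NNReal) < c := by positivity
  have happ : ApproximatesLinearOn (fun x => (c:ℝ) • f x) (0 : E →L[ℝ] E) s δ := by
    intro x hx y hy
    simp only [ContinuousLinearMap.zero_apply, sub_zero]
    rw [← smul_sub, norm_smul]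
    have h1 : ‖f x - f y‖ ≤ (K:ℝ) * ‖x - y‖ := by
      have := hf.dist_le_mul x hx y hy
      simpa [dist_eq_norm] using this
    have h2 : (c:ℝ) * ‖f x - f y‖ ≤ (c:ℝ) * ((K:ℝ) * ‖x - y‖) :=
      mul_le_mul_of_nonneg_left h1 c.coe_nonneg
    have h3 : (c:ℝ) * (K:ℝ) ≤ (δ:ℝ) := by
      have : c * (K + 1) = δ := by
        rw [hc, div_mul_cancel₀]
        exact (by positivity : (0:NNReal) < K + 1).ne'
      calc (c:ℝ) * (K:ℝ) ≤ (c:ℝ) * ((K:ℝ) + 1) := by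
            apply mul_le_mul_of_nonneg_left (by linarith) c.coe_nonneg
        _ = (δ:ℝ) := by exact_mod_cast congrArg NNReal.toReal this
    calc ‖(c:ℝ)‖ * ‖f x - f y‖ = (c:ℝ) * ‖f x - f y‖ := by
          rw [Real.norm_eq_abs, abs_of_nonneg c.coe_nonneg]
      _ ≤ (c:ℝ) * (K:ℝ) * ‖x - y‖ := by rw [mul_assoc]; exact h2
      _ ≤ (δ:ℝ) * ‖x - y‖ := mul_le_mul_of_nonneg_right h3 (norm_nonneg _)
  have himg : μ ((fun x => (c:ℝ) • f x) '' s) = 0 :=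
    le_antisymm (by simpa [hs] using hδ s _ happ) zero_le
  have heq : (fun x => (c:ℝ) • f x) '' s = (c:ℝ) • (f '' s) := by
    rw [← Set.image_smul, Set.image_image]
  rw [heq, Measure.addHaar_smul] at himg
  have hne : ENNReal.ofReal |(c:ℝ) ^ Module.finrank ℝ E| ≠ 0 := by
    simp only [ne_eq, ENNReal.ofReal_eq_zero, not_le]
    positivity
  exact (mul_eq_zero.1 himg).resolve_left hne

/-- A map that is locally Lipschitz on a set sends null subsets to null sets. -/
lemma loclip_image_null [SecondCountableTopology E] {f : E → E} {U : Set E}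
    (hU : ∀ x ∈ U, ∃ ε > (0:ℝ), ∃ L : NNReal, LipschitzOnWith L f (Metric.ball x ε ∩ U))
    {N : Set E} (hN : N ⊆ U) (hN0 : μ N = 0) : μ (f '' N) = 0 := by
  choose! ε hε L hL using hU
  obtain ⟨t, htc, htU⟩ := TopologicalSpace.isOpen_iUnion_countable
    (fun x : U => Metric.ball (x:E) (ε x)) (fun x => Metric.isOpen_ball)
  have hcover : N ⊆ ⋃ i ∈ t, Metric.ball (i:E) (ε i) := by
    rw [htU]
    intro x hx
    exact Set.mem_iUnion.2 ⟨⟨x, hN hx⟩, Metric.mem_ball_self (hε x (hN hx))⟩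
  have : f '' N ⊆ ⋃ i ∈ t, f '' (N ∩ Metric.ball (i:E) (ε i)) := by
    intro y hy
    obtain ⟨x, hx, rfl⟩ := hy
    obtain ⟨i, hi, hxi⟩ := Set.mem_iUnion₂.1 (hcover hx)
    exact Set.mem_iUnion₂.2 ⟨i, hi, Set.mem_image_of_mem f ⟨hx, hxi⟩⟩
  refine le_antisymm (le_trans (measure_mono this) ?_) zero_le
  rw [le_zero_iff, measure_biUnion_null_iff htc]
  intro i _
  have hlip : LipschitzOnWith (L i) f (N ∩ Metric.ball (i:E) (ε i)) := by
    apply (hL i i.2).mono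
    intro x hx
    exact ⟨hx.2, hN hx.1⟩
  exact lipschitzOnWith_image_null μ hlip (measure_mono_null Set.inter_subset_left hN0)

end Helpers


/-- **Unweighted transport estimate.** For every nonnegative measurable `w` and every
`s ∈ [-T,T]`, `∫_Ω w(F_s(x)) dx ≤ (C₁(T)/φ_*) ∫_Ω φ(x) w(x) dx`,
where `C₁(T) = (φ^*/φ_*) exp(Γ_div T / φ_*)`. -/
theorem unweighted_transport_estimate
    {d : ℕ} (Ω : Set (EuclideanSpace ℝ (Fin d)))
    (hΩo : IsOpen Ω) (hΩb : Bornology.IsBounded Ω)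
    (T φs φS Γdiv : ℝ) (hT : 0 < T) (hφs : 0 < φs)
    (φ : EuclideanSpace ℝ (Fin d) → ℝ) (hφm : Measurable φ)
    (hφ : ∀ᵐ x ∂(volume.restrict Ω), φs ≤ φ x ∧ φ x ≤ φS)
    (V : EuclideanSpace ℝ (Fin d) → EuclideanSpace ℝ (Fin d))
    (hVm : Measurable V) (hVb : ∃ M, ∀ x ∈ Ω, ‖V x‖ ≤ M)
    (g : EuclideanSpace ℝ (Fin d) → ℝ) (hgm : Measurable g)
    (hgb : ∀ᵐ x ∂(volume.restrict Ω), |g x| ≤ Γdiv)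
    (hdiv : ∀ ψ : EuclideanSpace ℝ (Fin d) → ℝ, ContDiff ℝ (⊤ : ℕ∞) ψ →
      ∫ x in Ω, (inner ℝ (gradient ψ x) (V x) : ℝ) = - ∫ x in Ω, ψ x * g x)
    (𝒞 : Set (EuclideanSpace ℝ (Fin d))) (h𝒞c : IsClosed 𝒞)
    (h𝒞0 : volume 𝒞 = 0) (h𝒞Ω : 𝒞 ⊆ Ω)
    (F : ℝ → EuclideanSpace ℝ (Fin d) → EuclideanSpace ℝ (Fin d))
    (hFmaps : ∀ t ∈ Icc (-T) T, MapsTo (F t) (Ω \ 𝒞) (Ω \ 𝒞))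
    (hF0 : ∀ x ∈ Ω \ 𝒞, F 0 x = x)
    (hFlip : ∀ x ∈ Ω \ 𝒞, ∃ L : NNReal, LipschitzOnWith L (fun t => F t x) (Icc (-T) T))
    (hFode : ∀ x ∈ Ω \ 𝒞, ∃ S : Set ℝ, S.Countable ∧ ∀ t ∈ Icc (-T) T \ S,
      HasDerivAt (fun τ => F τ x) ((φ (F t x))⁻¹ • V (F t x)) t)
    (hFinj : ∀ t ∈ Icc (-T) T, InjOn (F t) (Ω \ 𝒞))
    (hFsurj : ∀ t ∈ Icc (-T) T, SurjOn (F t) (Ω \ 𝒞) (Ω \ 𝒞))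
    (hFloclip : ∀ t ∈ Icc (-T) T, ∀ x ∈ Ω \ 𝒞, ∃ ε > (0:ℝ), ∃ L : NNReal,
      LipschitzOnWith L (F t) (Metric.ball x ε ∩ (Ω \ 𝒞)))
    (hFgrp : ∀ s ∈ Icc (-T) T, ∀ t ∈ Icc (-T) T, s + t ∈ Icc (-T) T →
      ∀ x ∈ Ω \ 𝒞, F (t + s) x = F t (F s x))
    (J : ℝ → EuclideanSpace ℝ (Fin d) → ℝ)
    (hJ : ∀ t ∈ Icc (-T) T, ∀ᵐ x ∂(volume.restrict Ω),
      ∃ L : EuclideanSpace ℝ (Fin d) →L[ℝ] EuclideanSpace ℝ (Fin d),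
        HasFDerivAt (F t) L x ∧
        J t x = LinearMap.det (L : EuclideanSpace ℝ (Fin d) →ₗ[ℝ] EuclideanSpace ℝ (Fin d)))
    -- Jacobian bound, established for piecewise smooth `φ` and `V`:
    (hJbd : ∀ s ∈ Icc (-T) T, ∀ᵐ x ∂(volume.restrict Ω),
      |J s x| ≤ (φS / φs) * Real.exp (Γdiv * T / φs)) :
    ∀ w : EuclideanSpace ℝ (Fin d) → ℝ, Measurable w → (∀ x, 0 ≤ w x) →
      ∀ s ∈ Icc (-T) T,
        ∫⁻ x in Ω, ENNReal.ofReal (w (F s x))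
          ≤ ENNReal.ofReal (((φS / φs) * Real.exp (Γdiv * T / φs)) / φs) *
            ∫⁻ x in Ω, ENNReal.ofReal (φ x * w x) := by
  intro w hwm hw0 s hs
  set C₁ := (φS / φs) * Real.exp (Γdiv * T / φs) with hC₁
  have hΩm : MeasurableSet Ω := hΩo.measurableSet
  by_cases hC : 0 ≤ C₁
  swap
  · -- degenerate case: the bound on `|J|` by a negative number forces `Ω` to be null
    have h2 : ∀ᵐ x ∂(volume.restrict Ω), False := by
      filter_upwards [hJbd s hs] with x hx
      exact hC (le_trans (abs_nonneg _) hx)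
    have h3 : volume.restrict Ω Set.univ = 0 := by
      have := ae_iff.1 h2
      simpa using this
    have h4 : volume.restrict Ω = 0 := Measure.measure_univ_eq_zero.1 h3
    calc ∫⁻ x in Ω, ENNReal.ofReal (w (F s x)) = 0 := by rw [h4, lintegral_zero_measure]
      _ ≤ _ := zero_le
  -- main case
  have hs1 : -T ≤ s := hs.1
  have hs2 : s ≤ T := hs.2
  have hsneg : -s ∈ Icc (-T) T := ⟨by linarith, by linarith⟩
  set P : EuclideanSpace ℝ (Fin d) → Prop := fun x =>
    (∃ L : EuclideanSpace ℝ (Fin d) →L[ℝ] EuclideanSpace ℝ (Fin d),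
      HasFDerivAt (F (-s)) L x ∧
      J (-s) x = LinearMap.det
        (L : EuclideanSpace ℝ (Fin d) →ₗ[ℝ] EuclideanSpace ℝ (Fin d))) ∧
    |J (-s) x| ≤ C₁ with hP
  have hQ : ∀ᵐ x ∂(volume.restrict Ω), P x := (hJ (-s) hsneg).and (hJbd (-s) hsneg)
  have hbad0 : volume.restrict Ω {x | ¬ P x} = 0 := ae_iff.1 hQ
  set bad := toMeasurable (volume.restrict Ω) {x | ¬ P x} with hbaddef
  have hbadm : MeasurableSet bad := measurableSet_toMeasurable _ _
  have hbadν : volume.restrict Ω bad = 0 := by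
    rw [hbaddef, measure_toMeasurable]; exact hbad0
  have hbadvol : volume (bad ∩ Ω) = 0 := by
    rwa [Measure.restrict_apply hbadm] at hbadν
  set B := (Ω \ 𝒞) \ bad with hBdef
  have hBm : MeasurableSet B := (hΩm.diff h𝒞c.measurableSet).diff hbadm
  have hBsub : B ⊆ Ω \ 𝒞 := diff_subset
  have hBP : ∀ x ∈ B, P x := by
    intro x hx
    by_contra h
    exact hx.2 (subset_toMeasurable _ _ h)
  have hN0 : volume ((Ω \ 𝒞) \ B) = 0 := by
    refine measure_mono_null ?_ hbadvol
    intro x hx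
    refine ⟨?_, hx.1.1⟩
    by_contra hxb
    exact hx.2 ⟨hx.1, hxb⟩
  set f' : EuclideanSpace ℝ (Fin d) →
      EuclideanSpace ℝ (Fin d) →L[ℝ] EuclideanSpace ℝ (Fin d) :=
    fun x => fderiv ℝ (F (-s)) x with hf'def
  have hderiv : ∀ x ∈ B, HasFDerivAt (F (-s)) (f' x) x := by
    intro x hx
    obtain ⟨L, hL, _⟩ := (hBP x hx).1
    rw [hf'def]
    simpa [hL.fderiv] using hL
  have hdet : ∀ x ∈ B, |(f' x).det| ≤ C₁ := by
    intro x hx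
    obtain ⟨⟨L, hL, hJL⟩, hb⟩ := hBP x hx
    have hfx : f' x = L := hL.fderiv
    rw [hfx]
    show |LinearMap.det (L : EuclideanSpace ℝ (Fin d) →ₗ[ℝ] EuclideanSpace ℝ (Fin d))| ≤ C₁
    rw [← hJL]; exact hb
  have hinj : InjOn (F (-s)) B := (hFinj (-s) hsneg).mono hBsub
  have key := lintegral_image_eq_lintegral_abs_det_fderiv_mul volume hBm
    (fun x hx => (hderiv x hx).hasFDerivWithinAt) hinj
    (fun y => ENNReal.ofReal (w (F s y)))
  have hcomp : ∀ x ∈ Ω \ 𝒞, F s (F (-s) x) = x := by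
    intro x hx
    have h0 := hFgrp (-s) hsneg s hs (by rw [neg_add_cancel]; exact ⟨by linarith, by linarith⟩) x hx
    rw [add_neg_cancel] at h0
    rw [← h0]
    exact hF0 x hx
  have key2 : ∫⁻ y in F (-s) '' B, ENNReal.ofReal (w (F s y))
      = ∫⁻ x in B, ENNReal.ofReal |(f' x).det| * ENNReal.ofReal (w x) := by
    rw [key]
    refine setLIntegral_congr_fun hBm (fun x hx => ?_)
    rw [hcomp x (hBsub hx)]
  have hcover : Ω \ 𝒞 ⊆ (F (-s) '' B) ∪ (F (-s) '' ((Ω \ 𝒞) \ B)) := by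
    intro y hy
    obtain ⟨x, hx, hxy⟩ := hFsurj (-s) hsneg hy
    by_cases hxB : x ∈ B
    · exact Or.inl ⟨x, hxB, hxy⟩
    · exact Or.inr ⟨x, ⟨hx, hxB⟩, hxy⟩
  have himgnull : volume (F (-s) '' ((Ω \ 𝒞) \ B)) = 0 :=
    loclip_image_null volume (hFloclip (-s) hsneg) diff_subset hN0
  have hres : volume.restrict (Ω \ 𝒞) = volume.restrict Ω := by
    refine Measure.restrict_congr_set ?_
    exact diff_ae_eq_self.2 (measure_mono_null inter_subset_right h𝒞0)
  have hstep : ∫⁻ x in Ω, ENNReal.ofReal (w x)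
      ≤ ENNReal.ofReal φs⁻¹ * ∫⁻ x in Ω, ENNReal.ofReal (φ x * w x) := by
    rw [← lintegral_const_mul' _ _ ENNReal.ofReal_ne_top]
    refine lintegral_mono_ae ?_
    filter_upwards [hφ] with x hx
    rw [← ENNReal.ofReal_mul (by positivity)]
    apply ENNReal.ofReal_le_ofReal
    have h2 : φs * w x ≤ φ x * w x := mul_le_mul_of_nonneg_right hx.1 (hw0 x)
    calc w x = φs⁻¹ * (φs * w x) := by field_simp
      _ ≤ φs⁻¹ * (φ x * w x) := mul_le_mul_of_nonneg_left h2 (by positivity)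
  calc ∫⁻ x in Ω, ENNReal.ofReal (w (F s x))
      = ∫⁻ x in Ω \ 𝒞, ENNReal.ofReal (w (F s x)) := by rw [hres]
    _ ≤ ∫⁻ x in (F (-s) '' B) ∪ (F (-s) '' ((Ω \ 𝒞) \ B)),
        ENNReal.ofReal (w (F s x)) := lintegral_mono_set hcover
    _ ≤ (∫⁻ x in F (-s) '' B, ENNReal.ofReal (w (F s x)))
        + ∫⁻ x in F (-s) '' ((Ω \ 𝒞) \ B), ENNReal.ofReal (w (F s x)) :=
        lintegral_union_le _ _ _
    _ = ∫⁻ x in F (-s) '' B, ENNReal.ofReal (w (F s x)) := by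
        rw [setLIntegral_measure_zero _ _ himgnull, add_zero]
    _ = ∫⁻ x in B, ENNReal.ofReal |(f' x).det| * ENNReal.ofReal (w x) := key2
    _ ≤ ∫⁻ x in B, ENNReal.ofReal C₁ * ENNReal.ofReal (w x) := by
        refine lintegral_mono_ae ((ae_restrict_iff' hBm).2 (ae_of_all _ fun x hx => ?_))
        exact mul_le_mul_left (ENNReal.ofReal_le_ofReal (hdet x hx)) _
    _ = ENNReal.ofReal C₁ * ∫⁻ x in B, ENNReal.ofReal (w x) :=
        lintegral_const_mul' _ _ ENNReal.ofReal_ne_top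
    _ ≤ ENNReal.ofReal C₁ * ∫⁻ x in Ω, ENNReal.ofReal (w x) := by
        refine mul_le_mul_right (lintegral_mono_set ?_) _
        exact hBsub.trans diff_subset
    _ ≤ ENNReal.ofReal C₁ *
        (ENNReal.ofReal φs⁻¹ * ∫⁻ x in Ω, ENNReal.ofReal (φ x * w x)) :=
        mul_le_mul_right hstep _
    _ = ENNReal.ofReal (C₁ / φs) * ∫⁻ x in Ω, ENNReal.ofReal (φ x * w x) := by
        rw [← mul_assoc, ← ENNReal.ofReal_mul hC, div_eq_mul_inv]
end

section
/- (Translation estimate along the flow for smooth functions.) Let r, α ∈ [1,∞] be such that 1/α = 1/2 + 1/r. Then for every function f that is continuously differentiable on a neighbourhood of the closure of Ω and every s ∈ [−T,T], ‖f ∘ F_s − f‖_{L^α(Ω)} ≤ (C₁(T)^{1/α}/φ_*) |s| ‖V‖_{L²(Ω)} ‖∇f‖_{L^r(Ω)}, where C₁(T) = (φ^*/φ_*) exp(Γ_div T / φ_*). (The paper states this for all f ∈ W^{1,r}(Ω); the case of C¹ functions is the core case, from which the general case follows by density.) -/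
open MeasureTheory Set Filter Metric intervalIntegral
open scoped Topology ENNReal NNReal

section FTC
variable {g g' φ : ℝ → ℝ} {a b : ℝ}

/-- FTC inequality allowing a countable exceptional set, where an eventual slope bound
is available. Adapted from mathlib's `sub_le_integral_of_hasDeriv_right_of_le_Ico`. -/
theorem aux_sub_le_integral (hab : a ≤ b)
    (hcont : ContinuousOn g (Icc a b)) {S : Set ℝ}
    (hderiv : ∀ x ∈ Ico a b \ S, HasDerivWithinAt g (g' x) (Ioi x) x)
    (φint : IntegrableOn φ (Icc a b))
    (hφg : ∀ x ∈ Ico a b \ S, g' x ≤ φ x)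
    (hexc : ∀ x ∈ Ico a b ∩ S, ∃ C : ℝ, C ≤ φ x ∧ ∀ᶠ v in 𝓝[>] x, g v - g x ≤ C * (v - x)) :
    g b - g a ≤ ∫ y in a..b, φ y := by
  refine le_of_forall_pos_le_add fun ε εpos => ?_
  rcases exists_lt_lowerSemicontinuous_integral_lt φ φint εpos with
    ⟨G', f_lt_G', G'cont, G'int, G'lt_top, hG'⟩
  set s := {t | g t - g a ≤ ∫ u in a..t, (G' u).toReal} ∩ Icc a b
  have s_closed : IsClosed s := by
    have : ContinuousOn (fun t => (g t - g a, ∫ u in a..t, (G' u).toReal)) (Icc a b) := by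
      rw [← uIcc_of_le hab] at G'int hcont ⊢
      exact (hcont.sub continuousOn_const).prodMk (continuousOn_primitive_interval G'int)
    simp only [s, inter_comm]
    exact this.preimage_isClosed_of_isClosed isClosed_Icc OrderClosedTopology.isClosed_le'
  have main : Icc a b ⊆ {t | g t - g a ≤ ∫ u in a..t, (G' u).toReal} := by
    refine s_closed.Icc_subset_of_forall_exists_gt
      (by simp only [integral_same, mem_setOf_eq, sub_self, le_rfl]) fun t ht v t_lt_v => ?_
    obtain ⟨y, φ_lt_y', y_lt_G'⟩ : ∃ y : ℝ, (φ t : EReal) < y ∧ (y : EReal) < G' t :=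
      EReal.lt_iff_exists_real_btwn.1 (f_lt_G' t)
    have φ_lt_y : φ t < y := EReal.coe_lt_coe_iff.1 φ_lt_y'
    have I1 : ∀ᶠ u in 𝓝[>] t, (u - t) * y ≤ ∫ w in t..u, (G' w).toReal := by
      have B : ∀ᶠ u in 𝓝 t, (y : EReal) < G' u := G'cont.lowerSemicontinuousAt _ _ y_lt_G'
      rcases mem_nhds_iff_exists_Ioo_subset.1 B with ⟨m, M, ⟨hm, hM⟩, H⟩
      have : Ioo t (min M b) ∈ 𝓝[>] t := Ioo_mem_nhdsGT (lt_min hM ht.right.right)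
      filter_upwards [this] with u hu
      have I : Icc t u ⊆ Icc a b := Icc_subset_Icc ht.2.1 (hu.2.le.trans (min_le_right _ _))
      calc
        (u - t) * y = ∫ _ in Icc t u, y := by
          simp only [hu.left.le, MeasureTheory.integral_const, smul_eq_mul, measureReal_restrict_apply_univ, measureReal_def, sub_nonneg,
            MeasurableSet.univ, Real.volume_Icc, Measure.restrict_apply, univ_inter,
            ENNReal.toReal_ofReal]
        _ ≤ ∫ w in t..u, (G' w).toReal := by
          rw [intervalIntegral.integral_of_le hu.1.le, ← integral_Icc_eq_integral_Ioc]
          apply setIntegral_mono_ae_restrict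
          · exact integrableOn_const measure_Icc_lt_top.ne
          · exact IntegrableOn.mono_set G'int I
          · have C1 : ∀ᵐ x : ℝ ∂volume.restrict (Icc t u), G' x < ∞ :=
              ae_mono (Measure.restrict_mono I le_rfl) G'lt_top
            have C2 : ∀ᵐ x : ℝ ∂volume.restrict (Icc t u), x ∈ Icc t u :=
              ae_restrict_mem measurableSet_Icc
            filter_upwards [C1, C2] with x G'x hx
            apply EReal.coe_le_coe_iff.1
            have : x ∈ Ioo m M := by
              simp only [hm.trans_le hx.left,
                (hx.right.trans_lt hu.right).trans_le (min_le_left M b), mem_Ioo, and_self_iff]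
            refine (H this).out.le.trans_eq ?_
            exact (EReal.coe_toReal G'x.ne (f_lt_G' x).ne_bot).symm
    have I2 : ∀ᶠ u in 𝓝[>] t, g u - g t ≤ (u - t) * y := by
      by_cases tS : t ∈ S
      · obtain ⟨C, hC, hev⟩ := hexc t ⟨ht.2, tS⟩
        filter_upwards [hev, self_mem_nhdsWithin] with u hu t_lt_u
        have h1 : (0:ℝ) ≤ u - t := by
          have : t < u := t_lt_u
          linarith
        calc g u - g t ≤ C * (u - t) := hu
          _ ≤ y * (u - t) := by nlinarith
          _ = (u - t) * y := mul_comm _ _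
      · have g'_lt_y : g' t < y := lt_of_le_of_lt (hφg t ⟨ht.2, tS⟩) φ_lt_y
        filter_upwards [(hderiv t ⟨ht.2, tS⟩).limsup_slope_le' (notMem_Ioi.2 le_rfl) g'_lt_y,
          self_mem_nhdsWithin] with u hu t_lt_u
        have := mul_le_mul_of_nonneg_left hu.le (sub_pos.2 t_lt_u.out).le
        rwa [← smul_eq_mul, sub_smul_slope] at this
    have I3 : ∀ᶠ u in 𝓝[>] t, g u - g t ≤ ∫ w in t..u, (G' w).toReal := by
      filter_upwards [I1, I2] with u hu1 hu2 using hu2.trans hu1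
    have I4 : ∀ᶠ u in 𝓝[>] t, u ∈ Ioc t (min v b) := by
      refine mem_nhdsGT_iff_exists_Ioc_subset.2 ⟨min v b, ?_, Subset.rfl⟩
      simp only [lt_min_iff, mem_Ioi]
      exact ⟨t_lt_v, ht.2.2⟩
    rcases (I3.and I4).exists with ⟨x, hx, h'x⟩
    refine ⟨x, ?_, Ioc_subset_Ioc le_rfl (min_le_left _ _) h'x⟩
    calc
      g x - g a = g t - g a + (g x - g t) := by abel
      _ ≤ (∫ w in a..t, (G' w).toReal) + ∫ w in t..x, (G' w).toReal := add_le_add ht.1 hx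
      _ = ∫ w in a..x, (G' w).toReal := by
        apply integral_add_adjacent_intervals
        · rw [intervalIntegrable_iff_integrableOn_Ioc_of_le ht.2.1]
          exact IntegrableOn.mono_set G'int
            (Ioc_subset_Icc_self.trans (Icc_subset_Icc le_rfl ht.2.2.le))
        · rw [intervalIntegrable_iff_integrableOn_Ioc_of_le h'x.1.le]
          apply IntegrableOn.mono_set G'int
          exact Ioc_subset_Icc_self.trans (Icc_subset_Icc ht.2.1 (h'x.2.trans (min_le_right _ _)))
  calc
    g b - g a ≤ ∫ y in a..b, (G' y).toReal := main (right_mem_Icc.2 hab)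
    _ ≤ (∫ y in a..b, φ y) + ε := by
      rw [intervalIntegral.integral_of_le hab, intervalIntegral.integral_of_le hab]
      simp only [integral_Icc_eq_integral_Ioc', Real.volume_singleton] at hG'
      exact hG'.le

theorem aux_abs_sub_le_integral (hab : a ≤ b)
    (hcont : ContinuousOn g (Icc a b)) {S : Set ℝ}
    (hderiv : ∀ x ∈ Ico a b \ S, HasDerivWithinAt g (g' x) (Ioi x) x)
    (φint : IntegrableOn φ (Icc a b))
    (hφg : ∀ x ∈ Ico a b \ S, |g' x| ≤ φ x)
    (hexc : ∀ x ∈ Ico a b ∩ S, ∃ C : ℝ, C ≤ φ x ∧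
      ∀ᶠ v in 𝓝[>] x, |g v - g x| ≤ C * (v - x)) :
    |g b - g a| ≤ ∫ y in a..b, φ y := by
  rw [abs_le]
  constructor
  · have := aux_sub_le_integral (g := fun t => -g t) (g' := fun t => -g' t) hab hcont.neg
      (fun x hx => (hderiv x hx).neg) φint
      (fun x hx => (neg_le_abs _).trans (hφg x hx))
      (fun x hx => by
        obtain ⟨C, hC, hev⟩ := hexc x hx
        refine ⟨C, hC, ?_⟩
        filter_upwards [hev] with v hv
        have h2 := (neg_le_abs (g v - g x)).trans hv
        linarith)
    simp only [sub_neg_eq_add, neg_add_eq_sub] at this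
    linarith [this]
  · exact aux_sub_le_integral hab hcont hderiv φint
      (fun x hx => (le_abs_self _).trans (hφg x hx))
      (fun x hx => by
        obtain ⟨C, hC, hev⟩ := hexc x hx
        exact ⟨C, hC, by filter_upwards [hev] with v hv using (le_abs_self _).trans hv⟩)

end FTC

open MeasureTheory Set Filter Metric Module
open scoped Topology ENNReal NNReal

section NullImage

variable {d : ℕ}
local notation "E" => EuclideanSpace ℝ (Fin d)

lemma aux_null_iff (A : Set (EuclideanSpace ℝ (Fin d))) :
    volume A = 0 ↔ μH[(d:ℝ)] A = 0 := by
  have h1 : (μH[(d:ℝ)] : Measure (EuclideanSpace ℝ (Fin d))).IsAddHaarMeasure := by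
    have h0 : (μH[((finrank ℝ (EuclideanSpace ℝ (Fin d)) : ℕ) : ℝ)] :
        Measure (EuclideanSpace ℝ (Fin d))).IsAddHaarMeasure :=
      MeasureTheory.isAddHaarMeasure_hausdorffMeasure
    rwa [finrank_euclideanSpace_fin] at h0
  have h2 := Measure.isAddLeftInvariant_eq_smul (volume : Measure (EuclideanSpace ℝ (Fin d)))
    (μH[(d:ℝ)])
  have h3 := Measure.isAddLeftInvariant_eq_smul (μH[(d:ℝ)])
    (volume : Measure (EuclideanSpace ℝ (Fin d)))
  constructor
  · intro hA
    rw [h3, Measure.smul_apply, hA]; simp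
  · intro hA
    rw [h2, Measure.smul_apply, hA]; simp

lemma aux_image_null {O A : Set (EuclideanSpace ℝ (Fin d))} (hO : IsOpen O)
    {Ψ : EuclideanSpace ℝ (Fin d) → EuclideanSpace ℝ (Fin d)}
    (hloc : ∀ x ∈ O, ∃ ε > (0:ℝ), ∃ L : NNReal, LipschitzOnWith L Ψ (ball x ε ∩ O))
    (hAO : A ⊆ O) (hA : volume A = 0) : volume (Ψ '' A) = 0 := by
  rw [aux_null_iff] at hA ⊢
  choose ε hε L hL using hloc
  obtain ⟨T, hTc, hTu⟩ := TopologicalSpace.isOpen_iUnion_countable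
    (fun x : A => ball (x : EuclideanSpace ℝ (Fin d)) (ε x (hAO x.2)))
    (fun x => isOpen_ball)
  have hcover : A ⊆ ⋃ x ∈ T, ball (x : EuclideanSpace ℝ (Fin d)) (ε x (hAO x.2)) := by
    intro a ha
    rw [hTu]
    exact mem_iUnion.2 ⟨⟨a, ha⟩, mem_ball_self (hε a (hAO ha))⟩
  have himg : Ψ '' A ⊆ ⋃ x ∈ T, Ψ '' (A ∩ ball (x : EuclideanSpace ℝ (Fin d)) (ε x (hAO x.2))) := by
    rintro _ ⟨a, ha, rfl⟩
    obtain ⟨x, hxT, hax⟩ := mem_iUnion₂.1 (hcover ha)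
    exact mem_iUnion₂.2 ⟨x, hxT, ⟨a, ⟨ha, hax⟩, rfl⟩⟩
  refine measure_mono_null himg ?_
  rw [measure_biUnion_null_iff hTc]
  intro x hxT
  have hsub : A ∩ ball (x : EuclideanSpace ℝ (Fin d)) (ε x (hAO x.2)) ⊆
      ball (x : EuclideanSpace ℝ (Fin d)) (ε x (hAO x.2)) ∩ O :=
    fun y hy => ⟨hy.2, hAO hy.1⟩
  have h1 := ((hL x (hAO x.2)).mono hsub).hausdorffMeasure_image_le (d := (d:ℝ)) (by positivity)
  refine le_antisymm (h1.trans ?_) (zero_le)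
  have : μH[(d:ℝ)] (A ∩ ball (x : EuclideanSpace ℝ (Fin d)) (ε x (hAO x.2))) = 0 :=
    measure_mono_null inter_subset_left hA
  rw [this, mul_zero]

end NullImage

section Jensen

lemma aux_jensen {X : Type*} [MeasurableSpace X] (μ : Measure X) (A : Set X)
    (f : X → ℝ≥0∞) (hf : AEMeasurable f (μ.restrict A)) {p : ℝ} (hp : 1 ≤ p) :
    (∫⁻ x in A, f x ∂μ) ^ p ≤ (μ A) ^ (p - 1) * ∫⁻ x in A, f x ^ p ∂μ := by
  rcases eq_or_lt_of_le hp with hp1 | hp1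
  · simp [← hp1]
  · have hpq : Real.HolderConjugate p (Real.conjExponent p) := Real.HolderConjugate.conjExponent hp1
    have h := ENNReal.lintegral_mul_le_Lp_mul_Lq (μ.restrict A) hpq hf
      (aemeasurable_const (b := (1:ℝ≥0∞)))
    rw [Real.conjExponent] at h hpq
    simp only [Pi.mul_apply, mul_one, ENNReal.one_rpow, lintegral_const,
      Measure.restrict_apply MeasurableSet.univ, univ_inter, one_mul] at h
    have hppos : (0:ℝ) < p := lt_trans zero_lt_one hp1
    have h2 := ENNReal.rpow_le_rpow h hppos.le
    rw [ENNReal.mul_rpow_of_nonneg _ _ hppos.le, ← ENNReal.rpow_mul, ← ENNReal.rpow_mul,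
      one_div, inv_mul_cancel₀ hppos.ne', ENNReal.rpow_one] at h2
    have hq : (1 / (p / (p - 1))) * p = p - 1 := by
      rw [one_div, inv_div]
      field_simp
    rw [hq] at h2
    exact h2.trans_eq (mul_comm _ _)

end Jensen

variable {d : ℕ}

lemma aux_cov {Ω 𝒞 : Set (EuclideanSpace ℝ (Fin d))} (hΩo : IsOpen Ω) (h𝒞c : IsClosed 𝒞)
    (h𝒞0 : volume 𝒞 = 0)
    {Φ Ψ : EuclideanSpace ℝ (Fin d) → EuclideanSpace ℝ (Fin d)}
    (hinj : InjOn Ψ (Ω \ 𝒞)) (hsurj : SurjOn Ψ (Ω \ 𝒞) (Ω \ 𝒞))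
    (hloclip : ∀ x ∈ Ω \ 𝒞, ∃ ε > (0:ℝ), ∃ L : NNReal,
      LipschitzOnWith L Ψ (Metric.ball x ε ∩ (Ω \ 𝒞)))
    (hinv : ∀ y ∈ Ω \ 𝒞, Φ (Ψ y) = y)
    {C1 : ℝ}
    (hJae : ∀ᵐ y ∂(volume.restrict Ω),
      ∃ L : EuclideanSpace ℝ (Fin d) →L[ℝ] EuclideanSpace ℝ (Fin d),
        HasFDerivAt Ψ L y ∧ |L.det| ≤ C1)
    (H2 : EuclideanSpace ℝ (Fin d) → ℝ≥0∞) (hH2 : Measurable H2) :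
    ∫⁻ x in Ω, H2 (Φ x) ≤ ENNReal.ofReal C1 * ∫⁻ y in Ω, H2 y := by
  set O := Ω \ 𝒞 with hOdef
  have hOopen : IsOpen O := hΩo.sdiff h𝒞c
  set P : EuclideanSpace ℝ (Fin d) → Prop :=
    (fun y => ∃ L : EuclideanSpace ℝ (Fin d) →L[ℝ] EuclideanSpace ℝ (Fin d),
      HasFDerivAt Ψ L y ∧ |L.det| ≤ C1) with hPdef
  have hN0 : volume ({y | ¬ P y} ∩ Ω) = 0 := by
    have h := (ae_iff.1 hJae)
    rwa [Measure.restrict_apply' hΩo.measurableSet] at h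
  set N := toMeasurable volume ({y | ¬ P y} ∩ Ω) with hNdef
  have hNm : MeasurableSet N := measurableSet_toMeasurable _ _
  have hNnull : volume N = 0 := by rw [hNdef, measure_toMeasurable]; exact hN0
  set s₀ := O \ N with hs₀def
  have hs₀m : MeasurableSet s₀ := hOopen.measurableSet.diff hNm
  have hPs₀ : ∀ y ∈ s₀, P y := by
    intro y hy
    by_contra hnP
    exact hy.2 (subset_toMeasurable _ _ ⟨hnP, hy.1.1⟩)
  have hder : ∀ y ∈ s₀, HasFDerivAt Ψ (fderiv ℝ Ψ y) y ∧ |(fderiv ℝ Ψ y).det| ≤ C1 := by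
    intro y hy
    obtain ⟨L, hL, hLd⟩ := hPs₀ y hy
    have hfd : fderiv ℝ Ψ y = L := hL.fderiv
    rw [hfd]
    exact ⟨hL, hLd⟩
  have cov := lintegral_image_eq_lintegral_abs_det_fderiv_mul (volume)
    hs₀m (fun y hy => (hder y hy).1.hasFDerivWithinAt)
    (hinj.mono diff_subset) (fun y => H2 (Φ y))
  -- the image of the exceptional set is null
  have hZ : volume (Ψ '' (O ∩ N)) = 0 :=
    aux_image_null hOopen hloclip inter_subset_left
      (measure_mono_null inter_subset_right hNnull)
  -- covering of Ω
  have hcover : Ω ⊆ (Ψ '' s₀) ∪ (𝒞 ∪ Ψ '' (O ∩ N)) := by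
    intro x hx
    by_cases hx𝒞 : x ∈ 𝒞
    · exact Or.inr (Or.inl hx𝒞)
    · obtain ⟨y, hyO, hyx⟩ := hsurj ⟨hx, hx𝒞⟩
      by_cases hyN : y ∈ N
      · exact Or.inr (Or.inr ⟨y, ⟨hyO, hyN⟩, hyx⟩)
      · exact Or.inl ⟨y, ⟨hyO, hyN⟩, hyx⟩
  calc ∫⁻ x in Ω, H2 (Φ x) ≤ ∫⁻ x in (Ψ '' s₀) ∪ (𝒞 ∪ Ψ '' (O ∩ N)), H2 (Φ x) :=
        lintegral_mono_set hcover
    _ ≤ (∫⁻ x in Ψ '' s₀, H2 (Φ x)) + ∫⁻ x in 𝒞 ∪ Ψ '' (O ∩ N), H2 (Φ x) :=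
        lintegral_union_le _ _ _
    _ = ∫⁻ x in Ψ '' s₀, H2 (Φ x) := by
        rw [setLIntegral_measure_zero _ _ (measure_union_null h𝒞0 hZ), add_zero]
    _ = ∫⁻ y in s₀, ENNReal.ofReal |(fderiv ℝ Ψ y).det| * H2 (Φ (Ψ y)) := cov
    _ = ∫⁻ y in s₀, ENNReal.ofReal |(fderiv ℝ Ψ y).det| * H2 y := by
        refine setLIntegral_congr_fun hs₀m (fun y hy => ?_)
        rw [hinv y hy.1]
    _ ≤ ∫⁻ y in s₀, ENNReal.ofReal C1 * H2 y := by
        refine lintegral_mono_ae ?_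
        filter_upwards [ae_restrict_mem hs₀m] with y hy
        exact mul_le_mul_left (ENNReal.ofReal_le_ofReal (hder y hy).2) _
    _ = ENNReal.ofReal C1 * ∫⁻ y in s₀, H2 y := lintegral_const_mul' _ _ ENNReal.ofReal_ne_top
    _ ≤ ENNReal.ofReal C1 * ∫⁻ y in Ω, H2 y := by
        exact mul_le_mul_right (lintegral_mono_set (fun y hy => hy.1.1)) _

open MeasureTheory Set

set_option maxHeartbeats 1000000 in
/-- **Translation estimate along the flow for smooth functions.** If `1/α = 1/2 + 1/r`
with `r, α ∈ [1,∞]`, then for every `f` continuously differentiable on a neighbourhood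
of the closure of `Ω` and every `s ∈ [-T,T]`,
`‖f ∘ F_s − f‖_{L^α(Ω)} ≤ (C₁(T)^{1/α}/φ_*) |s| ‖V‖_{L²(Ω)} ‖∇f‖_{L^r(Ω)}`. -/
theorem translation_estimate_flow_smooth
    {d : ℕ} (Ω : Set (EuclideanSpace ℝ (Fin d)))
    (hΩo : IsOpen Ω) (hΩb : Bornology.IsBounded Ω)
    (T φs φS Γdiv : ℝ) (hT : 0 < T) (hφs : 0 < φs)
    (φ : EuclideanSpace ℝ (Fin d) → ℝ) (hφm : Measurable φ)
    (hφ : ∀ᵐ x ∂(volume.restrict Ω), φs ≤ φ x ∧ φ x ≤ φS)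
    (V : EuclideanSpace ℝ (Fin d) → EuclideanSpace ℝ (Fin d))
    (hVm : Measurable V) (hVb : ∃ M, ∀ x ∈ Ω, ‖V x‖ ≤ M)
    (g : EuclideanSpace ℝ (Fin d) → ℝ) (hgm : Measurable g)
    (hgb : ∀ᵐ x ∂(volume.restrict Ω), |g x| ≤ Γdiv)
    (hdiv : ∀ ψ : EuclideanSpace ℝ (Fin d) → ℝ, ContDiff ℝ (⊤ : ℕ∞) ψ →
      ∫ x in Ω, (inner ℝ (gradient ψ x) (V x) : ℝ) = - ∫ x in Ω, ψ x * g x)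
    (𝒞 : Set (EuclideanSpace ℝ (Fin d))) (h𝒞c : IsClosed 𝒞)
    (h𝒞0 : volume 𝒞 = 0) (h𝒞Ω : 𝒞 ⊆ Ω)
    (F : ℝ → EuclideanSpace ℝ (Fin d) → EuclideanSpace ℝ (Fin d))
    (hFmaps : ∀ t ∈ Icc (-T) T, MapsTo (F t) (Ω \ 𝒞) (Ω \ 𝒞))
    (hF0 : ∀ x ∈ Ω \ 𝒞, F 0 x = x)
    (hFlip : ∀ x ∈ Ω \ 𝒞, ∃ L : NNReal, LipschitzOnWith L (fun t => F t x) (Icc (-T) T))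
    (hFode : ∀ x ∈ Ω \ 𝒞, ∃ S : Set ℝ, S.Countable ∧ ∀ t ∈ Icc (-T) T \ S,
      HasDerivAt (fun τ => F τ x) ((φ (F t x))⁻¹ • V (F t x)) t)
    (hFinj : ∀ t ∈ Icc (-T) T, InjOn (F t) (Ω \ 𝒞))
    (hFsurj : ∀ t ∈ Icc (-T) T, SurjOn (F t) (Ω \ 𝒞) (Ω \ 𝒞))
    (hFloclip : ∀ t ∈ Icc (-T) T, ∀ x ∈ Ω \ 𝒞, ∃ ε > (0:ℝ), ∃ L : NNReal,
      LipschitzOnWith L (F t) (Metric.ball x ε ∩ (Ω \ 𝒞)))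
    (hFgrp : ∀ s ∈ Icc (-T) T, ∀ t ∈ Icc (-T) T, s + t ∈ Icc (-T) T →
      ∀ x ∈ Ω \ 𝒞, F (t + s) x = F t (F s x))
    (J : ℝ → EuclideanSpace ℝ (Fin d) → ℝ)
    (hJ : ∀ t ∈ Icc (-T) T, ∀ᵐ x ∂(volume.restrict Ω),
      ∃ L : EuclideanSpace ℝ (Fin d) →L[ℝ] EuclideanSpace ℝ (Fin d),
        HasFDerivAt (F t) L x ∧
        J t x = LinearMap.det (L : EuclideanSpace ℝ (Fin d) →ₗ[ℝ] EuclideanSpace ℝ (Fin d)))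
    -- Jacobian bound, established for piecewise smooth `φ` and `V`:
    (hJbd : ∀ s ∈ Icc (-T) T, ∀ᵐ x ∂(volume.restrict Ω),
      |J s x| ≤ (φS / φs) * Real.exp (Γdiv * T / φs))
    (α r : ENNReal) (hα : 1 ≤ α) (hr : 1 ≤ r) (hαr : 1 / α = 1 / 2 + 1 / r) :
    ∀ f : EuclideanSpace ℝ (Fin d) → ℝ,
      (∃ U : Set (EuclideanSpace ℝ (Fin d)), IsOpen U ∧ closure Ω ⊆ U ∧ ContDiffOn ℝ 1 f U) →
      ∀ s ∈ Icc (-T) T,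
        eLpNorm (fun x => f (F s x) - f x) α (volume.restrict Ω)
          ≤ ENNReal.ofReal
              ((((φS / φs) * Real.exp (Γdiv * T / φs)) ^ (1 / α.toReal) / φs) * |s|) *
            eLpNorm V 2 (volume.restrict Ω) *
            eLpNorm (fun x => gradient f x) r (volume.restrict Ω) := by
  classical
  intro f hf s hs
  obtain ⟨U, hUo, hclU, hfC⟩ := hf
  -- trivial case : Ω has measure zero
  by_cases hΩ0 : volume Ω = 0
  · have h0 : (volume.restrict Ω : Measure (EuclideanSpace ℝ (Fin d))) = 0 :=
      Measure.restrict_eq_zero.2 hΩ0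
    simp only [h0, eLpNorm_measure_zero]
    exact zero_le
  -- trivial case : s = 0
  by_cases hs0 : s = 0
  · subst hs0
    have hz : eLpNorm (fun x => f (F 0 x) - f x) α (volume.restrict Ω) = 0 := by
      have hae : (fun x => f (F 0 x) - f x) =ᵐ[volume.restrict Ω] (fun _ => (0:ℝ)) := by
        have h1 : ∀ᵐ x ∂(volume.restrict Ω), x ∈ Ω := ae_restrict_mem hΩo.measurableSet
        have h2 : ∀ᵐ x ∂(volume.restrict Ω), x ∉ 𝒞 :=
          measure_eq_zero_iff_ae_notMem.1 (le_antisymm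
            (le_trans (Measure.restrict_le_self _) (le_of_eq h𝒞0)) (zero_le))
        filter_upwards [h1, h2] with x hx1 hx2
        rw [hF0 x ⟨hx1, hx2⟩, sub_self]
      rw [eLpNorm_congr_ae hae]
      exact eLpNorm_zero
    rw [hz]
    exact zero_le
  -- MAIN CASE
  -- basic exponent facts
  have hα0 : α ≠ 0 := by
    intro h; rw [h] at hα; exact absurd hα (by simp)
  have hα2 : α ≤ 2 := by
    have h12 : (2:ENNReal)⁻¹ ≤ α⁻¹ := by
      rw [one_div, one_div, one_div] at hαr
      rw [hαr]; exact le_self_add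
    exact ENNReal.inv_le_inv.1 h12
  have hαtop : α ≠ ⊤ := fun h => by rw [h] at hα2; exact absurd hα2 (by simp)
  set αR := α.toReal with hαRdef
  have hαR1 : 1 ≤ αR := by
    rw [hαRdef, ← ENNReal.toReal_one]
    exact ENNReal.toReal_mono hαtop hα
  have hαRpos : 0 < αR := lt_of_lt_of_le zero_lt_one hαR1
  -- ae membership facts
  have haeΩ : ∀ᵐ x ∂(volume.restrict Ω), x ∈ Ω := ae_restrict_mem hΩo.measurableSet
  have hae𝒞 : ∀ᵐ x ∂(volume.restrict Ω), x ∉ 𝒞 :=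
    measure_eq_zero_iff_ae_notMem.1 (le_antisymm
      (le_trans (Measure.restrict_le_self _) (le_of_eq h𝒞0)) (zero_le))
  have haeO : ∀ᵐ x ∂(volume.restrict Ω), x ∈ Ω \ 𝒞 := by
    filter_upwards [haeΩ, hae𝒞] with x h1 h2 using ⟨h1, h2⟩
  have hΩU : Ω ⊆ U := fun z hz => hclU (subset_closure hz)
  have hOopen : IsOpen (Ω \ 𝒞) := hΩo.sdiff h𝒞c
  -- σ, constants
  set σ := |s| with hσdef
  have hσpos : 0 < σ := abs_pos.2 hs0
  set C1 := (φS / φs) * Real.exp (Γdiv * T / φs) with hC1def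
  have hφSpos : 0 < φS := by
    have hne : volume.restrict Ω ≠ 0 := by
      rw [Ne, Measure.restrict_eq_zero]; exact hΩ0
    haveI : (ae (volume.restrict Ω)).NeBot := ae_neBot.2 hne
    obtain ⟨x₀, hx₀⟩ := hφ.exists
    linarith [hx₀.1, hx₀.2]
  have hC1nn : 0 ≤ C1 := by positivity
  -- measurability of gradient and h
  have mgradf : Measurable (fun y => gradient f y) := by
    have h1 : Measurable (fderiv ℝ f) := measurable_fderiv ℝ f
    exact ((InnerProductSpace.toDual ℝ
      (EuclideanSpace ℝ (Fin d))).symm.continuous.measurable).comp h1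
  set h : EuclideanSpace ℝ (Fin d) → ℝ := fun y => ‖gradient f y‖ * ‖V y‖ * |φ y|⁻¹ with hhdef
  have mh : Measurable h := ((mgradf.norm.mul hVm.norm).mul (hφm.abs.inv))
  have hnn : ∀ y, 0 ≤ h y := fun y => by positivity
  set H2 : EuclideanSpace ℝ (Fin d) → ENNReal :=
    fun y => ENNReal.ofReal (h y) ^ αR with hH2def
  have mH2 : Measurable H2 := (ENNReal.measurable_ofReal.comp mh).pow_const _
  -- globalized flow
  have hTT : -T ≤ T := by linarith
  set G : ℝ → EuclideanSpace ℝ (Fin d) → EuclideanSpace ℝ (Fin d) :=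
    fun t => (Ω \ 𝒞).piecewise (fun x => F ((projIcc (-T) T hTT t) : ℝ) x) id with hGdef
  have hFcontOn : ∀ t ∈ Icc (-T) T, ContinuousOn (F t) (Ω \ 𝒞) := by
    intro t ht x hx
    obtain ⟨ε, hε, L, hL⟩ := hFloclip t ht x hx
    have hmem : Metric.ball x ε ∩ (Ω \ 𝒞) ∈ nhds x :=
      (Metric.isOpen_ball.inter hOopen).mem_nhds ⟨Metric.mem_ball_self hε, hx⟩
    have hc : ContinuousWithinAt (F t) (Metric.ball x ε ∩ (Ω \ 𝒞)) x :=
      hL.continuousOn x ⟨Metric.mem_ball_self hε, hx⟩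
    exact (hc.continuousAt hmem).continuousWithinAt
  have hG_meas : ∀ t, Measurable (G t) := by
    intro t
    apply measurable_of_isOpen
    intro B hB
    simp only [hGdef]
    simp only [Set.piecewise_preimage]
    have h1 : IsOpen ((Ω \ 𝒞) ∩ (fun x => F ((projIcc (-T) T hTT t) : ℝ) x) ⁻¹' B) :=
      ContinuousOn.isOpen_inter_preimage
        (hFcontOn _ (Subtype.coe_prop (projIcc (-T) T hTT t))) hOopen hB
    have h1' : MeasurableSet
        ((fun x => F ((projIcc (-T) T hTT t) : ℝ) x) ⁻¹' B ∩ (Ω \ 𝒞)) := by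
      rw [Set.inter_comm]; exact h1.measurableSet
    exact h1'.union ((hB.measurableSet.preimage measurable_id).diff hOopen.measurableSet)
  have hG_cont : ∀ x, Continuous (fun t => G t x) := by
    intro x
    by_cases hx : x ∈ Ω \ 𝒞
    · have heq : (fun t => G t x) =
          (fun τ : ↥(Icc (-T) T) => F (τ : ℝ) x) ∘ (projIcc (-T) T hTT) := by
        funext t
        simp only [hGdef]
        simp only [Function.comp_apply]
        exact Set.piecewise_eq_of_mem _ _ _ hx
      rw [heq]
      obtain ⟨L, hL⟩ := hFlip x hx
      exact (hL.continuousOn.comp_continuous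
        (continuous_subtype_val.comp continuous_projIcc)
        (fun τ => Subtype.coe_prop _))
    · have heq : (fun t => G t x) = fun _ => x := by
        funext t
        simp only [hGdef]
        exact Set.piecewise_eq_of_notMem _ _ _ hx
      rw [heq]
      exact continuous_const
  have h𝒢 : Measurable (Function.uncurry G) :=
    measurable_uncurry_of_continuous_of_measurable hG_cont hG_meas
  have hGF : ∀ t ∈ Icc (-T) T, ∀ x ∈ Ω \ 𝒞, G t x = F t x := by
    intro t ht x hx
    simp only [hGdef]
    have := Set.piecewise_eq_of_mem (Ω \ 𝒞)
      (fun x => F ((projIcc (-T) T hTT t) : ℝ) x) id hx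
    rw [this, projIcc_of_mem hTT ht]
  -- segment Lipschitz estimate for f
  have hclΩc : IsCompact (closure Ω) := hΩb.isCompact_closure
  obtain ⟨δ, hδ, hKU⟩ := hclΩc.exists_cthickening_subset_open hUo hclU
  have hKc : IsCompact (Metric.cthickening δ (closure Ω)) := by
    refine Metric.isCompact_of_isClosed_isBounded Metric.isClosed_cthickening ?_
    exact hΩb.closure.cthickening
  have hfdc : ContinuousOn (fderiv ℝ f) U :=
    hfC.continuousOn_fderiv_of_isOpen hUo le_rfl
  obtain ⟨M0, hM0⟩ := hKc.exists_bound_of_continuousOn (hfdc.mono hKU)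
  set M := max M0 0 with hMdef
  have hMnn : 0 ≤ M := le_max_right _ _
  have hM : ∀ z ∈ Metric.cthickening δ (closure Ω), ‖fderiv ℝ f z‖ ≤ M :=
    fun z hz => (hM0 z hz).trans (le_max_left _ _)
  have hdiffU : ∀ z ∈ U, DifferentiableAt ℝ f z := fun z hz =>
    (hfC.differentiableOn one_ne_zero).differentiableAt (hUo.mem_nhds hz)
  have hseg : ∀ p ∈ Ω, ∀ q ∈ Ω, dist q p ≤ δ → |f q - f p| ≤ M * dist q p := by
    intro p hp q hq hpq
    have hsub : segment ℝ p q ⊆ Metric.cthickening δ (closure Ω) := by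
      intro z hz
      have hzb : z ∈ Metric.closedBall p (dist q p) :=
        (convex_closedBall p (dist q p)).segment_subset
          (Metric.mem_closedBall_self dist_nonneg) (Metric.mem_closedBall.2 le_rfl) hz
      exact Metric.mem_cthickening_of_dist_le z p δ _ (subset_closure hp)
        (le_trans (Metric.mem_closedBall.1 hzb) hpq)
    have := Convex.norm_image_sub_le_of_norm_fderiv_le
      (fun z hz => hdiffU z (hKU (hsub hz))) (fun z hz => hM z (hsub hz))
      (convex_segment p q) (left_mem_segment ℝ p q) (right_mem_segment ℝ p q)
    rwa [Real.norm_eq_abs, ← dist_eq_norm] at this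
  -- change of variables estimate, for each time t
  have hCoV : ∀ t ∈ Icc (-T) T,
      ∫⁻ x in Ω, H2 (F t x) ≤ ENNReal.ofReal C1 * ∫⁻ y in Ω, H2 y := by
    intro t ht
    have hmt : -t ∈ Icc (-T) T := ⟨by linarith [ht.2], by linarith [ht.1]⟩
    have h0T : (0:ℝ) ∈ Icc (-T) T := ⟨by linarith, by linarith⟩
    refine aux_cov hΩo h𝒞c h𝒞0 (hFinj _ hmt) (hFsurj _ hmt) (hFloclip _ hmt) ?_ ?_ H2 mH2
    · intro y hy
      have hgrp := hFgrp (-t) hmt t ht (by rw [neg_add_cancel]; exact h0T) y hy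
      rw [add_neg_cancel] at hgrp
      rw [← hgrp, hF0 y hy]
    · filter_upwards [hJ (-t) hmt, hJbd (-t) hmt] with y hy1 hy2
      obtain ⟨L, hL, hdet⟩ := hy1
      refine ⟨L, hL, ?_⟩
      have hdet' : L.det = J (-t) y := hdet.symm
      rw [hdet']
      exact hy2
  -- interval
  set a := min s 0 with hadef
  set b := max s 0 with hbdef
  have hab : a ≤ b := min_le_max.trans_eq rfl
  have haT : a ∈ Icc (-T) T := by
    constructor
    · rcases le_total s 0 with h | h
      · rw [hadef, min_eq_left h]; exact hs.1
      · rw [hadef, min_eq_right h]; linarith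
    · rcases le_total s 0 with h | h
      · rw [hadef, min_eq_left h]; exact hs.2
      · rw [hadef, min_eq_right h]; linarith
  have hbT : b ∈ Icc (-T) T := by
    constructor
    · rcases le_total s 0 with h | h
      · rw [hbdef, max_eq_right h]; linarith
      · rw [hbdef, max_eq_left h]; exact hs.1
    · rcases le_total s 0 with h | h
      · rw [hbdef, max_eq_right h]; linarith
      · rw [hbdef, max_eq_left h]; exact hs.2
  have hIccT : Icc a b ⊆ Icc (-T) T := fun t ht => ⟨haT.1.trans ht.1, ht.2.trans hbT.2⟩
  have hba : b - a = σ := by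
    rw [hσdef, hadef, hbdef, max_sub_min_eq_abs, zero_sub, abs_neg]
  -- the pointwise estimate
  have hpt : ∀ x ∈ Ω \ 𝒞, ENNReal.ofReal |f (F s x) - f x| ≤
      ∫⁻ t in Icc a b, ENNReal.ofReal (h (G t x)) := by
    intro x hx
    obtain ⟨Lx, hLx⟩ := hFlip x hx
    obtain ⟨Sx, hSxc, hSxd⟩ := hFode x hx
    set LL := (Lx : ℝ) + 1 with hLLdef
    have hLL : 0 < LL := by positivity
    have hflow : ∀ t ∈ Icc (-T) T, F t x ∈ Ω \ 𝒞 := fun t ht => hFmaps t ht hx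
    have hflowd : ∀ t ∈ Icc (-T) T, ∀ t' ∈ Icc (-T) T,
        dist (F t' x) (F t x) ≤ LL * |t' - t| := by
      intro t ht t' ht'
      have h1 := hLx.dist_le_mul t' ht' t ht
      rw [Real.dist_eq] at h1
      refine h1.trans ?_
      have : (Lx : ℝ) ≤ LL := by rw [hLLdef]; linarith
      exact mul_le_mul_of_nonneg_right this (abs_nonneg _)
    set u : ℝ → ℝ := fun t => f (F t x) with hudef
    set δ' := δ / LL with hδ'def
    have hδ' : 0 < δ' := div_pos hδ hLL
    set Cx := M * LL with hCxdef
    have hCx : 0 ≤ Cx := mul_nonneg hMnn hLL.le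
    have huloc : ∀ t ∈ Icc (-T) T, ∀ t' ∈ Icc (-T) T, |t' - t| ≤ δ' →
        |u t' - u t| ≤ Cx * |t' - t| := by
      intro t ht t' ht' hd
      have h1 : dist (F t' x) (F t x) ≤ LL * |t' - t| := hflowd t ht t' ht'
      have h2 : dist (F t' x) (F t x) ≤ δ := by
        refine h1.trans ?_
        rw [hδ'def] at hd
        calc LL * |t' - t| ≤ LL * (δ / LL) :=
              mul_le_mul_of_nonneg_left hd hLL.le
          _ = δ := by field_simp
      have h3 := hseg (F t x) (hflow t ht).1 (F t' x) (hflow t' ht').1 h2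
      calc |u t' - u t| ≤ M * dist (F t' x) (F t x) := h3
        _ ≤ M * (LL * |t' - t|) := mul_le_mul_of_nonneg_left h1 hMnn
        _ = Cx * |t' - t| := by rw [hCxdef]; ring
    -- derivative of u
    set w : ℝ → ℝ := fun t => (fderiv ℝ f (F t x)) ((φ (F t x))⁻¹ • V (F t x)) with hwdef
    have huder : ∀ t ∈ Ico a b \ Sx, HasDerivAt u (w t) t := by
      intro t ht
      have htT : t ∈ Icc (-T) T := hIccT (Ico_subset_Icc_self ht.1)
      have hd1 := hSxd t ⟨htT, ht.2⟩
      have hpU : F t x ∈ U := hΩU (hflow t htT).1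
      have hdf : HasFDerivAt f (fderiv ℝ f (F t x)) (F t x) :=
        (hdiffU _ hpU).hasFDerivAt
      exact hdf.comp_hasDerivAt t hd1
    have hwh : ∀ t ∈ Icc (-T) T, |w t| ≤ h (F t x) := by
      intro t ht
      have h1 : |w t| ≤ ‖fderiv ℝ f (F t x)‖ * ‖(φ (F t x))⁻¹ • V (F t x)‖ := by
        rw [hwdef, ← Real.norm_eq_abs]
        exact (fderiv ℝ f (F t x)).le_opNorm _
      have h2 : ‖(φ (F t x))⁻¹ • V (F t x)‖ = |φ (F t x)|⁻¹ * ‖V (F t x)‖ := by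
        rw [norm_smul, Real.norm_eq_abs, abs_inv]
      have h3 : ‖gradient f (F t x)‖ = ‖fderiv ℝ f (F t x)‖ :=
        LinearIsometryEquiv.norm_map _ _
      rw [hhdef]
      calc |w t| ≤ ‖fderiv ℝ f (F t x)‖ * (|φ (F t x)|⁻¹ * ‖V (F t x)‖) := by
            rw [← h2]; exact h1
        _ = ‖gradient f (F t x)‖ * ‖V (F t x)‖ * |φ (F t x)|⁻¹ := by rw [h3]; ring
    have hwC : ∀ t ∈ Ico a b \ Sx, |w t| ≤ Cx := by
      intro t ht
      have hu' := huder t ht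
      rw [hasDerivAt_iff_tendsto_slope] at hu'
      have hu'' : Filter.Tendsto (slope u t) (nhdsWithin t (Ioi t)) (nhds (w t)) :=
        hu'.mono_left (nhdsWithin_mono t (fun v hv => ne_of_gt hv))
      have hIoo : Ioo t (min b (t + δ')) ∈ nhdsWithin t (Ioi t) :=
        Ioo_mem_nhdsGT (lt_min ht.1.2 (by linarith))
      have hev : ∀ᶠ v in nhdsWithin t (Ioi t), |slope u t v| ≤ Cx := by
        filter_upwards [hIoo] with v hv
        have hvt : t < v := hv.1
        have hvb : v ≤ b := (hv.2.le).trans (min_le_left _ _)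
        have hvT : v ∈ Icc (-T) T := hIccT ⟨ht.1.1.trans hvt.le, hvb⟩
        have htT : t ∈ Icc (-T) T := hIccT (Ico_subset_Icc_self ht.1)
        have hd : |v - t| ≤ δ' := by
          rw [abs_of_pos (by linarith)]
          have := hv.2.le.trans (min_le_right _ _)
          linarith
        have hb1 := huloc t htT v hvT hd
        rw [slope_def_field, abs_div]
        rw [div_le_iff₀ (by rw [abs_of_pos (by linarith)]; linarith)]
        calc |u v - u t| ≤ Cx * |v - t| := hb1
          _ = Cx * |v - t| := rfl
      exact le_of_tendsto hu''.abs hev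
    -- the majorant
    set φx : ℝ → ℝ := fun τ => if τ ∈ Sx then Cx else min (h (G τ x)) Cx with hφxdef
    have mG_x : Measurable (fun τ => G τ x) :=
      h𝒢.comp (measurable_id.prodMk measurable_const)
    have mφx : Measurable φx :=
      Measurable.ite hSxc.measurableSet measurable_const
        ((mh.comp mG_x).min measurable_const)
    have hφx_nonneg : ∀ τ, 0 ≤ φx τ := by
      intro τ
      simp only [hφxdef]
      by_cases hτ : τ ∈ Sx
      · rw [if_pos hτ]; exact hCx
      · rw [if_neg hτ]; exact le_min (hnn _) hCx

    have hφx_bd : ∀ τ, |φx τ| ≤ Cx := by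
      intro τ
      rw [abs_of_nonneg (hφx_nonneg τ)]
      simp only [hφxdef]
      by_cases hτ : τ ∈ Sx
      · rw [if_pos hτ]
      · rw [if_neg hτ]; exact min_le_right _ _

    have φint : IntegrableOn φx (Icc a b) := by
      refine Measure.integrableOn_of_bounded (M := Cx) ?_ mφx.aestronglyMeasurable ?_
      · exact (measure_Icc_lt_top).ne
      · exact Filter.Eventually.of_forall fun τ => by
          rw [Real.norm_eq_abs]; exact hφx_bd τ
    have hφg' : ∀ τ ∈ Ico a b \ Sx, |w τ| ≤ φx τ := by
      intro τ hτ
      have hτT : τ ∈ Icc (-T) T := hIccT (Ico_subset_Icc_self hτ.1)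
      simp only [hφxdef, if_neg hτ.2]
      refine le_min ?_ (hwC τ hτ)
      rw [hGF τ hτT x hx]
      exact hwh τ hτT
    have hexc' : ∀ τ ∈ Ico a b ∩ Sx, ∃ C : ℝ, C ≤ φx τ ∧
        ∀ᶠ v in nhdsWithin τ (Ioi τ), |u v - u τ| ≤ C * (v - τ) := by
      intro τ hτ
      refine ⟨Cx, by simp only [hφxdef, if_pos hτ.2]; exact le_rfl, ?_⟩
      have hIoo : Ioo τ (min b (τ + δ')) ∈ nhdsWithin τ (Ioi τ) :=
        Ioo_mem_nhdsGT (lt_min hτ.1.2 (by linarith))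
      filter_upwards [hIoo] with v hv
      have hvt : τ < v := hv.1
      have hvb : v ≤ b := (hv.2.le).trans (min_le_left _ _)
      have hvT : v ∈ Icc (-T) T := hIccT ⟨hτ.1.1.trans hvt.le, hvb⟩
      have hτT : τ ∈ Icc (-T) T := hIccT (Ico_subset_Icc_self hτ.1)
      have hd : |v - τ| ≤ δ' := by
        rw [abs_of_pos (by linarith)]
        have := hv.2.le.trans (min_le_right _ _)
        linarith
      have hb1 := huloc τ hτT v hvT hd
      rwa [abs_of_pos (by linarith : (0:ℝ) < v - τ)] at hb1
    have hucont : ContinuousOn u (Icc a b) := by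
      have hflowc : ContinuousOn (fun t => F t x) (Icc (-T) T) := hLx.continuousOn
      exact ContinuousOn.comp hfC.continuousOn (hflowc.mono hIccT)
        (fun t ht => hΩU (hflow t (hIccT ht)).1)
    have key := aux_abs_sub_le_integral hab hucont
      (fun τ hτ => (huder τ hτ).hasDerivWithinAt) φint hφg' hexc'
    -- identify |u b - u a| with |f (F s x) - f x|
    have habs : |f (F s x) - f x| = |u b - u a| := by
      rcases le_total 0 s with hs' | hs'
      · have ha0 : a = 0 := by rw [hadef, min_eq_right hs']
        have hbs : b = s := by rw [hbdef, max_eq_left hs']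
        rw [ha0, hbs, hudef]
        simp only []
        rw [hF0 x hx]
      · have has : a = s := by rw [hadef, min_eq_left hs']
        have hb0 : b = 0 := by rw [hbdef, max_eq_right hs']
        rw [has, hb0, hudef]
        simp only []
        rw [hF0 x hx, abs_sub_comm]
    rw [habs]
    calc ENNReal.ofReal |u b - u a| ≤ ENNReal.ofReal (∫ y in a..b, φx y) :=
          ENNReal.ofReal_le_ofReal key
      _ = ENNReal.ofReal (∫ y in Ioc a b, φx y ∂volume) := by
          rw [intervalIntegral.integral_of_le hab]
      _ ≤ ∫⁻ y in Ioc a b, ENNReal.ofReal (φx y) := by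
          rw [integral_eq_lintegral_of_nonneg_ae
            (Filter.Eventually.of_forall hφx_nonneg) mφx.aestronglyMeasurable]
          exact ENNReal.ofReal_toReal_le
      _ ≤ ∫⁻ y in Icc a b, ENNReal.ofReal (φx y) :=
          lintegral_mono_set Ioc_subset_Icc_self
      _ ≤ ∫⁻ t in Icc a b, ENNReal.ofReal (h (G t x)) := by
          refine lintegral_mono_ae ?_
          have hSnull : ∀ᵐ τ ∂(volume.restrict (Icc a b)), τ ∉ Sx :=
            ae_restrict_of_ae (measure_eq_zero_iff_ae_notMem.1 (hSxc.measure_zero _))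
          filter_upwards [hSnull] with τ hτ
          refine ENNReal.ofReal_le_ofReal ?_
          simp only [hφxdef, if_neg hτ]
          exact min_le_left _ _
  -- final assembly
  set X := ∫⁻ y in Ω, H2 y with hXdef
  have hIccvol : volume (Icc a b) = ENNReal.ofReal σ := by
    rw [Real.volume_Icc, hba]
  have hαR1' : (0:ℝ) ≤ αR - 1 := by linarith
  have hoσ0 : ENNReal.ofReal σ ≠ 0 := (ENNReal.ofReal_pos.2 hσpos).ne'
  have mSect : ∀ x, Measurable (fun t => ENNReal.ofReal (h (G t x))) := by
    intro x
    exact ENNReal.measurable_ofReal.comp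
      (mh.comp (h𝒢.comp (measurable_id.prodMk measurable_const)))
  have hmain1 : ∫⁻ x, (‖f (F s x) - f x‖₊ : ENNReal) ^ αR ∂(volume.restrict Ω)
      ≤ ENNReal.ofReal σ ^ (αR - 1) *
        ∫⁻ x, (∫⁻ t in Icc a b, H2 (G t x)) ∂(volume.restrict Ω) := by
    rw [← lintegral_const_mul' _ _
      (ENNReal.rpow_ne_top_of_nonneg hαR1' ENNReal.ofReal_ne_top)]
    refine lintegral_mono_ae ?_
    filter_upwards [haeO] with x hx
    calc (‖f (F s x) - f x‖₊ : ENNReal) ^ αR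
        = ENNReal.ofReal |f (F s x) - f x| ^ αR := by
          rw [← enorm_eq_nnnorm, Real.enorm_eq_ofReal_abs]
      _ ≤ (∫⁻ t in Icc a b, ENNReal.ofReal (h (G t x))) ^ αR :=
          ENNReal.rpow_le_rpow (hpt x hx) (by linarith)
      _ ≤ volume (Icc a b) ^ (αR - 1) *
            ∫⁻ t in Icc a b, ENNReal.ofReal (h (G t x)) ^ αR :=
          aux_jensen _ _ _ (mSect x).aemeasurable hαR1
      _ = ENNReal.ofReal σ ^ (αR - 1) * ∫⁻ t in Icc a b, H2 (G t x) := by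
          rw [hIccvol]
  have hswap : ∫⁻ x, (∫⁻ t in Icc a b, H2 (G t x)) ∂(volume.restrict Ω)
      = ∫⁻ t in Icc a b, (∫⁻ x, H2 (G t x) ∂(volume.restrict Ω)) := by
    apply lintegral_lintegral_swap
    exact (mH2.comp (h𝒢.comp measurable_swap)).aemeasurable
  have hinner : ∀ t ∈ Icc a b,
      ∫⁻ x, H2 (G t x) ∂(volume.restrict Ω) ≤ ENNReal.ofReal C1 * X := by
    intro t ht
    have htT := hIccT ht
    have heq : ∫⁻ x, H2 (G t x) ∂(volume.restrict Ω)
        = ∫⁻ x, H2 (F t x) ∂(volume.restrict Ω) := by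
      apply lintegral_congr_ae
      filter_upwards [haeO] with x hx
      rw [hGF t htT x hx]
    rw [heq]
    exact hCoV t htT
  have houter : ∫⁻ t in Icc a b, (∫⁻ x, H2 (G t x) ∂(volume.restrict Ω))
      ≤ ENNReal.ofReal σ * (ENNReal.ofReal C1 * X) := by
    calc ∫⁻ t in Icc a b, (∫⁻ x, H2 (G t x) ∂(volume.restrict Ω))
        ≤ ∫⁻ _t in Icc a b, (ENNReal.ofReal C1 * X) := by
          refine lintegral_mono_ae ?_
          filter_upwards [ae_restrict_mem measurableSet_Icc] with t ht using hinner t ht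
      _ = (ENNReal.ofReal C1 * X) * volume (Icc a b) := setLIntegral_const _ _
      _ = ENNReal.ofReal σ * (ENNReal.ofReal C1 * X) := by rw [hIccvol]; ring
  have htotal : ∫⁻ x, (‖f (F s x) - f x‖₊ : ENNReal) ^ αR ∂(volume.restrict Ω)
      ≤ ENNReal.ofReal σ ^ αR * (ENNReal.ofReal C1 * X) := by
    refine hmain1.trans ?_
    rw [hswap]
    refine (mul_le_mul_right houter _).trans_eq ?_
    rw [← mul_assoc]
    congr 1
    rw [show ENNReal.ofReal σ ^ (αR - 1) * ENNReal.ofReal σ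
        = ENNReal.ofReal σ ^ (αR - 1) * ENNReal.ofReal σ ^ (1:ℝ) by
          rw [ENNReal.rpow_one],
      ← ENNReal.rpow_add _ _ hoσ0 ENNReal.ofReal_ne_top]
    norm_num
  have hLph : X ^ (1/αR) = eLpNorm h α (volume.restrict Ω) := by
    rw [eLpNorm_eq_lintegral_rpow_enorm_toReal hα0 hαtop]
    congr 1
    apply lintegral_congr
    intro y
    rw [Real.enorm_eq_ofReal (hnn y)]
  have hHold : eLpNorm h α (volume.restrict Ω) ≤ ENNReal.ofReal φs⁻¹ *
      (eLpNorm V 2 (volume.restrict Ω) *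
        eLpNorm (fun x => gradient f x) r (volume.restrict Ω)) := by
    have step1 : eLpNorm h α (volume.restrict Ω) ≤
        eLpNorm (fun y => φs⁻¹ • (‖V y‖ * ‖gradient f y‖)) α (volume.restrict Ω) := by
      apply eLpNorm_mono_ae
      filter_upwards [hφ] with y hy
      have hφy : 0 < φ y := lt_of_lt_of_le hφs hy.1
      have hin : |φ y|⁻¹ ≤ φs⁻¹ := by
        rw [abs_of_pos hφy]
        exact inv_anti₀ hφs hy.1
      have hφsinn : (0:ℝ) ≤ φs⁻¹ := by positivity
      rw [Real.norm_eq_abs, Real.norm_eq_abs, abs_of_nonneg (hnn y), abs_of_nonneg (by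
        simp only [smul_eq_mul]; positivity)]
      calc h y = ‖gradient f y‖ * ‖V y‖ * |φ y|⁻¹ := rfl
        _ ≤ ‖gradient f y‖ * ‖V y‖ * φs⁻¹ :=
            mul_le_mul_of_nonneg_left hin (by positivity)
        _ = φs⁻¹ • (‖V y‖ * ‖gradient f y‖) := by rw [smul_eq_mul]; ring
    have step2 : eLpNorm (fun y => φs⁻¹ • (‖V y‖ * ‖gradient f y‖)) α (volume.restrict Ω)
        = ENNReal.ofReal φs⁻¹ *
          eLpNorm (fun y => ‖V y‖ * ‖gradient f y‖) α (volume.restrict Ω) := by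
      rw [show (fun y => φs⁻¹ • (‖V y‖ * ‖gradient f y‖))
          = (φs⁻¹ : ℝ) • (fun y => ‖V y‖ * ‖gradient f y‖) from rfl]
      rw [eLpNorm_const_smul]
      congr 1
      rw [Real.enorm_eq_ofReal (by positivity)]
    have step3 : eLpNorm (fun y => ‖V y‖ * ‖gradient f y‖) α (volume.restrict Ω) ≤
        eLpNorm V 2 (volume.restrict Ω) *
          eLpNorm (fun x => gradient f x) r (volume.restrict Ω) := by
      have hH : ENNReal.HolderTriple 2 r α := ⟨by simpa only [one_div] using hαr.symm⟩
      have hb : ∀ᵐ y ∂(volume.restrict Ω),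
          ‖‖V y‖ * ‖gradient f y‖‖ ≤ ((1 : NNReal) : ℝ) * ‖V y‖ * ‖gradient f y‖ := by
        refine Filter.Eventually.of_forall fun y => ?_
        rw [Real.norm_eq_abs, abs_of_nonneg (by positivity)]
        simp only [NNReal.coe_one, one_mul, le_refl]
      have := eLpNorm_le_eLpNorm_mul_eLpNorm'_of_norm (hpqr := hH) hVm.aestronglyMeasurable
        mgradf.aestronglyMeasurable (fun v w => ‖v‖ * ‖w‖) 1 hb
      simpa only [ENNReal.coe_one, one_mul] using this
    exact (step1.trans_eq step2).trans (mul_le_mul_right step3 _)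
  -- conclude
  rw [eLpNorm_eq_lintegral_rpow_enorm_toReal hα0 hαtop]
  have h1αR : (0:ℝ) ≤ 1/αR := by positivity
  calc (∫⁻ x, (‖f (F s x) - f x‖₊ : ENNReal) ^ αR ∂(volume.restrict Ω)) ^ (1/αR)
      ≤ (ENNReal.ofReal σ ^ αR * (ENNReal.ofReal C1 * X)) ^ (1/αR) :=
        ENNReal.rpow_le_rpow htotal h1αR
    _ = ENNReal.ofReal σ * (ENNReal.ofReal C1 ^ (1/αR) * X ^ (1/αR)) := by
        rw [ENNReal.mul_rpow_of_nonneg _ _ h1αR, ENNReal.mul_rpow_of_nonneg _ _ h1αR,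
          ← ENNReal.rpow_mul, mul_one_div_cancel hαRpos.ne', ENNReal.rpow_one]
    _ = ENNReal.ofReal σ * ENNReal.ofReal C1 ^ (1/αR) *
          eLpNorm h α (volume.restrict Ω) := by
        rw [hLph]; ring
    _ ≤ ENNReal.ofReal σ * ENNReal.ofReal C1 ^ (1/αR) *
          (ENNReal.ofReal φs⁻¹ * (eLpNorm V 2 (volume.restrict Ω) *
            eLpNorm (fun x => gradient f x) r (volume.restrict Ω))) :=
        mul_le_mul_right hHold _
    _ = ENNReal.ofReal ((C1 ^ (1/αR) / φs) * σ) * eLpNorm V 2 (volume.restrict Ω) *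
          eLpNorm (fun x => gradient f x) r (volume.restrict Ω) := by
        rw [show C1 ^ (1/αR) / φs * σ = C1 ^ (1/αR) * (φs⁻¹ * σ) from by
            rw [div_eq_mul_inv]; ring,
          ENNReal.ofReal_mul (by positivity : (0:ℝ) ≤ C1 ^ (1/αR)),
          ENNReal.ofReal_mul (by positivity : (0:ℝ) ≤ φs⁻¹),
          ← ENNReal.ofReal_rpow_of_nonneg hC1nn h1αR]
        ring
end
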